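/- arXiv:1110.4297 — 2 statements merged into one kernel-verified Lean document; each statement's English description precedes it below -/
import Mathlib

section
/- The subspace h𝔽 = {F ∈ 𝔽 : F₁(F) = F₂(F) = 0} decomposes as the orthogonal direct sum h𝔽 = 𝔽₉ ⊕ 𝔽₁₀ ⊕ 𝔽₁₁ ⊕ 𝔽₁₂, invariant under the action on 𝔽 of every linear isometry A of V with A∘φ = φ∘A and Aξ = ξ, where 𝔽₉ = {F ∈ 𝔽 : F = hF = F₉(F)}, 𝔽₁₀ = {F ∈ 𝔽 : F = hF = F₁₀(F) − F₉(F)}, 𝔽₁₁ = {F ∈ 𝔽 : F = hF = F₁₁(F)}, 𝔽₁₂ = {F ∈ 𝔽 : F = hF = F₁₂(F) − F₁₁(F)}; the corresponding components of F ∈ h𝔽 are F₉(F), F₁₀(F) − F₉(F), F₁₁(F), and F₁₂(F) − F₁₁(F). -/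
open scoped BigOperators RealInnerProductSpace

noncomputable section

variable {V : Type*} [NormedAddCommGroup V] [InnerProductSpace ℝ V]

/-- A map `V → V → V → ℝ` linear in each of its three arguments. -/
def Trilinear (F : V → V → V → ℝ) : Prop :=
  (∀ y z, IsLinearMap ℝ fun x => F x y z) ∧
  (∀ x z, IsLinearMap ℝ fun y => F x y z) ∧
  (∀ x y, IsLinearMap ℝ fun z => F x y z)

/-- Almost contact metric structure `(φ, ξ, η, g)` on `V` with `dim V = 2n+1`. -/
def ACM (n : ℕ) (φ : V →ₗ[ℝ] V) (ξ : V) (η : V →ₗ[ℝ] ℝ) : Prop :=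
  Module.finrank ℝ V = 2 * n + 1 ∧
  (∀ x, φ (φ x) = -x + η x • ξ) ∧
  φ ξ = 0 ∧
  (∀ x, η (φ x) = 0) ∧
  ⟪ξ, ξ⟫ = 1 ∧
  (∀ x y, ⟪φ x, φ y⟫ = ⟪x, y⟫ - η x * η y)

/-- Membership in the space `𝔽` of trilinear forms with the symmetries (1). -/
def InF (φ : V →ₗ[ℝ] V) (ξ : V) (η : V →ₗ[ℝ] ℝ) (F : V → V → V → ℝ) : Prop :=
  Trilinear F ∧
  (∀ x y z, F x y z = -F x z y) ∧
  (∀ x y z, F x y z = -F x (φ y) (φ z) + η y * F x ξ z + η z * F x y ξ)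

/-- `h x = -φ²x`. -/
def hMap (φ : V →ₗ[ℝ] V) (x : V) : V := -φ (φ x)

/-- `hF(x,y,z) = F(hx,hy,hz)`. -/
def hF (φ : V →ₗ[ℝ] V) (F : V → V → V → ℝ) : V → V → V → ℝ :=
  fun x y z => F (hMap φ x) (hMap φ y) (hMap φ z)

def F1 (ξ : V) (η : V →ₗ[ℝ] ℝ) (F : V → V → V → ℝ) : V → V → V → ℝ :=
  fun x y z => η x * F ξ y z

def F2 (ξ : V) (η : V →ₗ[ℝ] ℝ) (F : V → V → V → ℝ) : V → V → V → ℝ :=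
  fun x y z => η y * F x ξ z - η z * F x ξ y

def F3 (ξ : V) (η : V →ₗ[ℝ] ℝ) (F : V → V → V → ℝ) : V → V → V → ℝ :=
  fun x y z => η x * η y * F ξ ξ z - η x * η z * F ξ ξ y

def F4 (φ : V →ₗ[ℝ] V) (ξ : V) (η : V →ₗ[ℝ] ℝ) (F : V → V → V → ℝ) : V → V → V → ℝ :=
  fun x y z => η y * F (φ x) ξ (φ z) - η z * F (φ x) ξ (φ y)

def F5 (ξ : V) (η : V →ₗ[ℝ] ℝ) (F : V → V → V → ℝ) : V → V → V → ℝ :=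
  fun x y z => η y * F z ξ x - η z * F y ξ x

def F6 (φ : V →ₗ[ℝ] V) (ξ : V) (η : V →ₗ[ℝ] ℝ) (F : V → V → V → ℝ) : V → V → V → ℝ :=
  fun x y z => η y * F (φ z) ξ (φ x) - η z * F (φ y) ξ (φ x)

/-- `f(F)(z) = Σᵢ F(eᵢ, eᵢ, z)`. -/
def fTr {ι : Type*} [Fintype ι] (e : OrthonormalBasis ι ℝ V) (F : V → V → V → ℝ) (z : V) : ℝ :=
  ∑ i, F (e i) (e i) z

/-- `f*(F)(z) = Σᵢ F(eᵢ, φ eᵢ, z)`. -/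
def fTrStar {ι : Type*} [Fintype ι] (φ : V →ₗ[ℝ] V) (e : OrthonormalBasis ι ℝ V)
    (F : V → V → V → ℝ) (z : V) : ℝ :=
  ∑ i, F (e i) (φ (e i)) z

/-- The inner product on `𝔽`: `⟨F,G⟩ = Σ_{i,j,k} F(eᵢ,eⱼ,e_k) G(eᵢ,eⱼ,e_k)`. -/
def innerF {ι : Type*} [Fintype ι] (e : OrthonormalBasis ι ℝ V) (F G : V → V → V → ℝ) : ℝ :=
  ∑ i, ∑ j, ∑ k, F (e i) (e j) (e k) * G (e i) (e j) (e k)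

def F7 (n : ℕ) {ι : Type*} [Fintype ι] (e : OrthonormalBasis ι ℝ V) (ξ : V) (η : V →ₗ[ℝ] ℝ)
    (F : V → V → V → ℝ) : V → V → V → ℝ :=
  fun x y z => (1 / (2 * (n : ℝ))) * fTr e F ξ * (η z * ⟪x, y⟫ - η y * ⟪x, z⟫)

def F8 (n : ℕ) (φ : V →ₗ[ℝ] V) {ι : Type*} [Fintype ι] (e : OrthonormalBasis ι ℝ V) (ξ : V)
    (η : V →ₗ[ℝ] ℝ) (F : V → V → V → ℝ) : V → V → V → ℝ :=
  fun x y z => -(1 / (2 * (n : ℝ))) * fTrStar φ e F ξ * (η z * ⟪x, φ y⟫ - η y * ⟪x, φ z⟫)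

def F9 (n : ℕ) (φ : V →ₗ[ℝ] V) {ι : Type*} [Fintype ι] (e : OrthonormalBasis ι ℝ V)
    (F : V → V → V → ℝ) : V → V → V → ℝ :=
  fun x y z => (1 / (2 * ((n : ℝ) - 1))) *
    (⟪hMap φ x, hMap φ y⟫ * fTr e F z - ⟪hMap φ x, hMap φ z⟫ * fTr e F y
      - ⟪x, φ y⟫ * fTr e F (φ z) + ⟪x, φ z⟫ * fTr e F (φ y))

def F10 (φ : V →ₗ[ℝ] V) (F : V → V → V → ℝ) : V → V → V → ℝ :=
  fun x y z => (1 / 2) * (F x y z + F (φ x) (φ y) z)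

def F11 (φ : V →ₗ[ℝ] V) (F : V → V → V → ℝ) : V → V → V → ℝ :=
  fun x y z => (1 / 6) * (F x y z + F y z x + F z x y
    - F (φ x) (φ y) z - F (φ y) (φ z) x - F (φ z) (φ x) y)

def F12 (φ : V →ₗ[ℝ] V) (F : V → V → V → ℝ) : V → V → V → ℝ :=
  fun x y z => (1 / 2) * (F x y z - F (φ x) (φ y) z)

/-- The action of a linear isometry `A` of `V` on trilinear forms:
`(A·F)(x,y,z) = F(A⁻¹x, A⁻¹y, A⁻¹z)`. -/
def actA (A : V ≃ₗᵢ[ℝ] V) (F : V → V → V → ℝ) : V → V → V → ℝ :=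
  fun x y z => F (A.symm x) (A.symm y) (A.symm z)

def L1 (ξ : V) (η : V →ₗ[ℝ] ℝ) (F : V → V → V → ℝ) : V → V → V → ℝ :=
  fun x y z => F x y z - 2 * F3 ξ η F x y z

def L2 (ξ : V) (η : V →ₗ[ℝ] ℝ) (F : V → V → V → ℝ) : V → V → V → ℝ :=
  fun x y z => F x y z - 2 * (F1 ξ η F x y z + F2 ξ η F x y z)

def L3 (ξ : V) (η : V →ₗ[ℝ] ℝ) (F : V → V → V → ℝ) : V → V → V → ℝ :=
  fun x y z => F2 ξ η F x y z - F1 ξ η F x y z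

def L4 (φ : V →ₗ[ℝ] V) (ξ : V) (η : V →ₗ[ℝ] ℝ) (F : V → V → V → ℝ) : V → V → V → ℝ :=
  fun x y z => -F4 φ ξ η F x y z

def L5 (ξ : V) (η : V →ₗ[ℝ] ℝ) (F : V → V → V → ℝ) : V → V → V → ℝ :=
  fun x y z => -F5 ξ η F x y z

def L6 (n : ℕ) {ι : Type*} [Fintype ι] (e : OrthonormalBasis ι ℝ V) (ξ : V) (η : V →ₗ[ℝ] ℝ)
    (F : V → V → V → ℝ) : V → V → V → ℝ :=
  fun x y z => F x y z - 2 * F7 n e ξ η F x y z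

def L7 (n : ℕ) (φ : V →ₗ[ℝ] V) {ι : Type*} [Fintype ι] (e : OrthonormalBasis ι ℝ V) (ξ : V)
    (η : V →ₗ[ℝ] ℝ) (F : V → V → V → ℝ) : V → V → V → ℝ :=
  fun x y z => F x y z - 2 * F8 n φ e ξ η F x y z

/-- The subspace `𝔽₁ = {F ∈ 𝔽 : F = F₃(F)}`. -/
def MemF1sub (φ : V →ₗ[ℝ] V) (ξ : V) (η : V →ₗ[ℝ] ℝ) (F : V → V → V → ℝ) : Prop :=
  InF φ ξ η F ∧ F = F3 ξ η F

/-- The subspace `v𝔽 = {F ∈ 𝔽 : hF = 0, ω(F) = 0}`. -/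
def MemVF (φ : V →ₗ[ℝ] V) (ξ : V) (η : V →ₗ[ℝ] ℝ) (F : V → V → V → ℝ) : Prop :=
  InF φ ξ η F ∧ hF φ F = 0 ∧ ∀ z, F ξ ξ z = 0

/-- The subspace `h𝔽 = {F ∈ 𝔽 : F₁(F) = F₂(F) = 0}`. -/
def MemHF (φ : V →ₗ[ℝ] V) (ξ : V) (η : V →ₗ[ℝ] ℝ) (F : V → V → V → ℝ) : Prop :=
  InF φ ξ η F ∧ F1 ξ η F = 0 ∧ F2 ξ η F = 0

/-- The subspace `(v𝔽)′ = {F ∈ 𝔽 : hF = 0, F(ξ,·,·) = 0}`. -/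
def MemVF' (φ : V →ₗ[ℝ] V) (ξ : V) (η : V →ₗ[ℝ] ℝ) (F : V → V → V → ℝ) : Prop :=
  InF φ ξ η F ∧ hF φ F = 0 ∧ ∀ y z, F ξ y z = 0

/-- The subspace `𝔽₈ = {F ∈ 𝔽 : hF = 0, F(·,·,ξ) = 0}`. -/
def MemF8sub (φ : V →ₗ[ℝ] V) (ξ : V) (η : V →ₗ[ℝ] ℝ) (F : V → V → V → ℝ) : Prop :=
  InF φ ξ η F ∧ hF φ F = 0 ∧ ∀ x y, F x y ξ = 0

/-- The subspace `𝒩 = {F ∈ (v𝔽)′ : F = F₄(F)}`. -/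
def MemN (φ : V →ₗ[ℝ] V) (ξ : V) (η : V →ₗ[ℝ] ℝ) (F : V → V → V → ℝ) : Prop :=
  MemVF' φ ξ η F ∧ F = F4 φ ξ η F

/-- The subspace `𝒩̃ = {F ∈ (v𝔽)′ : F = -F₄(F)}`. -/
def MemNt (φ : V →ₗ[ℝ] V) (ξ : V) (η : V →ₗ[ℝ] ℝ) (F : V → V → V → ℝ) : Prop :=
  MemVF' φ ξ η F ∧ F = -F4 φ ξ η F

/-- The subspace `𝒬𝒮𝔽 = {F ∈ (v𝔽)′ : F = F₄(F) = F₅(F)}`. -/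
def MemQS (φ : V →ₗ[ℝ] V) (ξ : V) (η : V →ₗ[ℝ] ℝ) (F : V → V → V → ℝ) : Prop :=
  MemVF' φ ξ η F ∧ F = F4 φ ξ η F ∧ F = F5 ξ η F

/-- The subspace `𝒬𝒦𝔽 = {F ∈ (v𝔽)′ : F = F₄(F) = -F₅(F)}`. -/
def MemQK (φ : V →ₗ[ℝ] V) (ξ : V) (η : V →ₗ[ℝ] ℝ) (F : V → V → V → ℝ) : Prop :=
  MemVF' φ ξ η F ∧ F = F4 φ ξ η F ∧ F = -F5 ξ η F

/-- The subspace `𝔽₆ = {F ∈ (v𝔽)′ : F = -F₄(F) = F₅(F)}`. -/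
def MemF6sub (φ : V →ₗ[ℝ] V) (ξ : V) (η : V →ₗ[ℝ] ℝ) (F : V → V → V → ℝ) : Prop :=
  MemVF' φ ξ η F ∧ F = -F4 φ ξ η F ∧ F = F5 ξ η F

/-- The subspace `𝔽₇ = {F ∈ (v𝔽)′ : F = -F₄(F) = -F₅(F)}`. -/
def MemF7sub (φ : V →ₗ[ℝ] V) (ξ : V) (η : V →ₗ[ℝ] ℝ) (F : V → V → V → ℝ) : Prop :=
  MemVF' φ ξ η F ∧ F = -F4 φ ξ η F ∧ F = -F5 ξ η F

/-- The subspace `𝔽₂ = {F ∈ 𝔽 : F = F₇(F)}`. -/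
def MemF2sub (n : ℕ) {ι : Type*} [Fintype ι] (e : OrthonormalBasis ι ℝ V) (φ : V →ₗ[ℝ] V)
    (ξ : V) (η : V →ₗ[ℝ] ℝ) (F : V → V → V → ℝ) : Prop :=
  InF φ ξ η F ∧ F = F7 n e ξ η F

/-- The subspace `𝔽₃ = {F ∈ 𝔽 : F = F₈(F)}`. -/
def MemF3sub (n : ℕ) {ι : Type*} [Fintype ι] (e : OrthonormalBasis ι ℝ V) (φ : V →ₗ[ℝ] V)
    (ξ : V) (η : V →ₗ[ℝ] ℝ) (F : V → V → V → ℝ) : Prop :=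
  InF φ ξ η F ∧ F = F8 n φ e ξ η F

/-- The subspace `𝔽₄ = {F ∈ 𝔽 : F = F₄(F) = F₅(F), f(F)(ξ) = 0}`. -/
def MemF4sub (n : ℕ) {ι : Type*} [Fintype ι] (e : OrthonormalBasis ι ℝ V) (φ : V →ₗ[ℝ] V)
    (ξ : V) (η : V →ₗ[ℝ] ℝ) (F : V → V → V → ℝ) : Prop :=
  InF φ ξ η F ∧ F = F4 φ ξ η F ∧ F = F5 ξ η F ∧ fTr e F ξ = 0

/-- The subspace `𝔽₅ = {F ∈ 𝔽 : F = F₄(F) = -F₅(F), f*(F)(ξ) = 0}`. -/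
def MemF5sub (n : ℕ) {ι : Type*} [Fintype ι] (e : OrthonormalBasis ι ℝ V) (φ : V →ₗ[ℝ] V)
    (ξ : V) (η : V →ₗ[ℝ] ℝ) (F : V → V → V → ℝ) : Prop :=
  InF φ ξ η F ∧ F = F4 φ ξ η F ∧ F = -F5 ξ η F ∧ fTrStar φ e F ξ = 0

/-- The subspace `𝔽₄ = {F ∈ (v𝔽)′ : F = F₄(F) = F₅(F), f(F)(ξ) = 0}`. -/
def MemF4sub' (n : ℕ) {ι : Type*} [Fintype ι] (e : OrthonormalBasis ι ℝ V) (φ : V →ₗ[ℝ] V)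
    (ξ : V) (η : V →ₗ[ℝ] ℝ) (F : V → V → V → ℝ) : Prop :=
  MemVF' φ ξ η F ∧ F = F4 φ ξ η F ∧ F = F5 ξ η F ∧ fTr e F ξ = 0

/-- The subspace `𝔽₅ = {F ∈ (v𝔽)′ : F = F₄(F) = -F₅(F), f*(F)(ξ) = 0}`. -/
def MemF5sub' (n : ℕ) {ι : Type*} [Fintype ι] (e : OrthonormalBasis ι ℝ V) (φ : V →ₗ[ℝ] V)
    (ξ : V) (η : V →ₗ[ℝ] ℝ) (F : V → V → V → ℝ) : Prop :=
  MemVF' φ ξ η F ∧ F = F4 φ ξ η F ∧ F = -F5 ξ η F ∧ fTrStar φ e F ξ = 0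

/-- The subspace `𝔽₉ = {F ∈ 𝔽 : F = hF = F₉(F)}`. -/
def MemF9sub (n : ℕ) {ι : Type*} [Fintype ι] (e : OrthonormalBasis ι ℝ V) (φ : V →ₗ[ℝ] V)
    (ξ : V) (η : V →ₗ[ℝ] ℝ) (F : V → V → V → ℝ) : Prop :=
  InF φ ξ η F ∧ F = hF φ F ∧ F = F9 n φ e F

/-- The subspace `𝔽₁₀ = {F ∈ 𝔽 : F = hF = F₁₀(F) - F₉(F)}`. -/
def MemF10sub (n : ℕ) {ι : Type*} [Fintype ι] (e : OrthonormalBasis ι ℝ V) (φ : V →ₗ[ℝ] V)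
    (ξ : V) (η : V →ₗ[ℝ] ℝ) (F : V → V → V → ℝ) : Prop :=
  InF φ ξ η F ∧ F = hF φ F ∧ F = F10 φ F - F9 n φ e F

/-- The subspace `𝔽₁₁ = {F ∈ 𝔽 : F = hF = F₁₁(F)}`. -/
def MemF11sub (φ : V →ₗ[ℝ] V) (ξ : V) (η : V →ₗ[ℝ] ℝ) (F : V → V → V → ℝ) : Prop :=
  InF φ ξ η F ∧ F = hF φ F ∧ F = F11 φ F

/-- The subspace `𝔽₁₂ = {F ∈ 𝔽 : F = hF = F₁₂(F) - F₁₁(F)}`. -/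
def MemF12sub (φ : V →ₗ[ℝ] V) (ξ : V) (η : V →ₗ[ℝ] ℝ) (F : V → V → V → ℝ) : Prop :=
  InF φ ξ η F ∧ F = hF φ F ∧ F = F12 φ F - F11 φ F

/-- The four subspaces `𝔽₉, 𝔽₁₀, 𝔽₁₁, 𝔽₁₂` of `h𝔽`. -/
def P18 (n : ℕ) {ι : Type*} [Fintype ι] (e : OrthonormalBasis ι ℝ V) (φ : V →ₗ[ℝ] V)
    (ξ : V) (η : V →ₗ[ℝ] ℝ) : Fin 4 → (V → V → V → ℝ) → Prop
  | 0 => MemF9sub n e φ ξ η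
  | 1 => MemF10sub n e φ ξ η
  | 2 => MemF11sub φ ξ η
  | 3 => MemF12sub φ ξ η

/-- The corresponding components of `F ∈ h𝔽`. -/
def p18 (n : ℕ) {ι : Type*} [Fintype ι] (e : OrthonormalBasis ι ℝ V) (φ : V →ₗ[ℝ] V)
    (F : V → V → V → ℝ) : Fin 4 → (V → V → V → ℝ)
  | 0 => F9 n φ e F
  | 1 => fun x y z => F10 φ F x y z - F9 n φ e F x y z
  | 2 => F11 φ F
  | 3 => fun x y z => F12 φ F x y z - F11 φ F x y z

namespace St18

variable {n : ℕ} {φ : V →ₗ[ℝ] V} {ξ : V} {η : V →ₗ[ℝ] ℝ}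

section Basic
variable (hacm : ACM n φ ξ η)
include hacm

lemma phiphi (x : V) : φ (φ x) = -x + η x • ξ := hacm.2.1 x
lemma phixi : φ ξ = 0 := hacm.2.2.1
lemma etaphi (x : V) : η (φ x) = 0 := hacm.2.2.2.1 x
lemma xixi : ⟪ξ, ξ⟫ = 1 := hacm.2.2.2.2.1
lemma inner_phi_phi (x y : V) : ⟪φ x, φ y⟫ = ⟪x, y⟫ - η x * η y := hacm.2.2.2.2.2 x y

lemma etaxi : η ξ = 1 := by
  have h1 := phiphi hacm ξ
  rw [phixi hacm, map_zero] at h1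
  have h2 := congrArg (fun v => ⟪v, ξ⟫) h1
  simp only [inner_add_left, inner_smul_left, inner_neg_left, inner_zero_left,
    RCLike.star_def, conj_trivial, xixi hacm] at h2
  linarith

lemma inner_xi (x : V) : ⟪x, ξ⟫ = η x := by
  have := inner_phi_phi hacm x ξ
  rw [phixi hacm, inner_zero_right, etaxi hacm] at this
  linarith

lemma xi_inner (x : V) : ⟪ξ, x⟫ = η x := by
  rw [real_inner_comm]; exact inner_xi hacm x

lemma skew (x y : V) : ⟪φ x, y⟫ = -⟪x, φ y⟫ := by
  have h1 := inner_phi_phi hacm x (φ y)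
  rw [etaphi hacm, mul_zero, sub_zero, phiphi hacm y] at h1
  rw [inner_add_right, inner_neg_right, inner_smul_right, inner_xi hacm, etaphi hacm] at h1
  linarith

lemma hMap_eq (x : V) : hMap φ x = x - η x • ξ := by
  rw [hMap, phiphi hacm x]; abel

lemma eta_hMap (x : V) : η (hMap φ x) = 0 := by
  rw [hMap_eq hacm, map_sub, map_smul, etaxi hacm]; simp

lemma hMap_xi : hMap φ ξ = 0 := by
  rw [hMap_eq hacm, etaxi hacm]; simp

lemma hMap_hMap (x : V) : hMap φ (hMap φ x) = hMap φ x := by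
  rw [hMap_eq hacm (hMap φ x), eta_hMap hacm]; simp

lemma phi_hMap (x : V) : φ (hMap φ x) = φ x := by
  rw [hMap_eq hacm, map_sub, map_smul, phixi hacm]; simp

lemma hMap_phi (x : V) : hMap φ (φ x) = φ x := by
  rw [hMap_eq hacm (φ x), etaphi hacm]; simp

lemma inner_h_left (x y : V) : ⟪hMap φ x, y⟫ = ⟪x, y⟫ - η x * η y := by
  rw [hMap_eq hacm, inner_sub_left, inner_smul_left]
  simp [xi_inner hacm]

lemma inner_h_h (x y : V) : ⟪hMap φ x, hMap φ y⟫ = ⟪x, y⟫ - η x * η y := by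
  rw [inner_h_left hacm, eta_hMap hacm, real_inner_comm, inner_h_left hacm]
  rw [real_inner_comm]; ring

lemma inner_h_right (x y : V) : ⟪x, hMap φ y⟫ = ⟪x, y⟫ - η x * η y := by
  rw [real_inner_comm, inner_h_left hacm, real_inner_comm]; ring

lemma inner_phiphi_right (x y : V) : ⟪x, φ (φ y)⟫ = -(⟪x, y⟫ - η x * η y) := by
  rw [phiphi hacm, inner_add_right, inner_neg_right, inner_smul_right, inner_xi hacm]; ring

lemma inner_phi_xi (y : V) : ⟪ξ, φ y⟫ = 0 := by
  rw [xi_inner hacm, etaphi hacm]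

end Basic

end St18
namespace St18
variable {n : ℕ} {φ : V →ₗ[ℝ] V} {ξ : V} {η : V →ₗ[ℝ] ℝ}

section Tri
variable {F : V → V → V → ℝ}

lemma t_add1 (h : Trilinear F) (x y a b : V) : F (x + y) a b = F x a b + F y a b :=
  (h.1 a b).map_add x y
lemma t_add2 (h : Trilinear F) (x y a b : V) : F a (x + y) b = F a x b + F a y b :=
  (h.2.1 a b).map_add x y
lemma t_add3 (h : Trilinear F) (x y a b : V) : F a b (x + y) = F a b x + F a b y :=
  (h.2.2 a b).map_add x y
lemma t_smul1 (h : Trilinear F) (c : ℝ) (x a b : V) : F (c • x) a b = c * F x a b :=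
  (h.1 a b).map_smul c x
lemma t_smul2 (h : Trilinear F) (c : ℝ) (x a b : V) : F a (c • x) b = c * F a x b :=
  (h.2.1 a b).map_smul c x
lemma t_smul3 (h : Trilinear F) (c : ℝ) (x a b : V) : F a b (c • x) = c * F a b x :=
  (h.2.2 a b).map_smul c x
lemma t_zero1 (h : Trilinear F) (a b : V) : F 0 a b = 0 := by
  have := t_smul1 h 0 0 a b; simpa using this
lemma t_zero2 (h : Trilinear F) (a b : V) : F a 0 b = 0 := by
  have := t_smul2 h 0 0 a b; simpa using this
lemma t_zero3 (h : Trilinear F) (a b : V) : F a b 0 = 0 := by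
  have := t_smul3 h 0 0 a b; simpa using this
lemma t_neg1 (h : Trilinear F) (x a b : V) : F (-x) a b = -F x a b := by
  have := t_smul1 h (-1) x a b; simpa using this
lemma t_neg2 (h : Trilinear F) (x a b : V) : F a (-x) b = -F a x b := by
  have := t_smul2 h (-1) x a b; simpa using this
lemma t_neg3 (h : Trilinear F) (x a b : V) : F a b (-x) = -F a b x := by
  have := t_smul3 h (-1) x a b; simpa using this
lemma t_sub1 (h : Trilinear F) (x y a b : V) : F (x - y) a b = F x a b - F y a b := by
  rw [sub_eq_add_neg, t_add1 h, t_neg1 h, sub_eq_add_neg]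
lemma t_sub2 (h : Trilinear F) (x y a b : V) : F a (x - y) b = F a x b - F a y b := by
  rw [sub_eq_add_neg, t_add2 h, t_neg2 h, sub_eq_add_neg]
lemma t_sub3 (h : Trilinear F) (x y a b : V) : F a b (x - y) = F a b x - F a b y := by
  rw [sub_eq_add_neg, t_add3 h, t_neg3 h, sub_eq_add_neg]

end Tri

/-- The key derived predicate for members of `h𝔽`. -/
def Good (φ : V →ₗ[ℝ] V) (ξ : V) (F : V → V → V → ℝ) : Prop :=
  Trilinear F ∧ (∀ x y z, F x z y = -F x y z) ∧
  (∀ x y z, F x (φ y) (φ z) = -F x y z) ∧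
  (∀ y z, F ξ y z = 0) ∧ (∀ x z, F x ξ z = 0)

namespace Good

variable {φ : V →ₗ[ℝ] V} {ξ : V} {η : V →ₗ[ℝ] ℝ} {n : ℕ} {F : V → V → V → ℝ}

lemma tri (h : Good φ ξ F) : Trilinear F := h.1
lemma anti (h : Good φ ξ F) : ∀ x y z, F x z y = -F x y z := h.2.1
lemma rel (h : Good φ ξ F) : ∀ x y z, F x (φ y) (φ z) = -F x y z := h.2.2.1
lemma xi1 (h : Good φ ξ F) : ∀ y z, F ξ y z = 0 := h.2.2.2.1
lemma xi2 (h : Good φ ξ F) : ∀ x z, F x ξ z = 0 := h.2.2.2.2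
lemma xi3 (h : Good φ ξ F) : ∀ x y, F x y ξ = 0 := fun x y => by
  rw [h.anti x ξ y, h.xi2]; ring

end Good

section GoodBasic

variable {F : V → V → V → ℝ}

lemma memHF_good (hacm : ACM n φ ξ η) (h : MemHF φ ξ η F) : Good φ ξ F := by
  obtain ⟨⟨htri, hanti, hrel⟩, h1, h2⟩ := h
  have hxi1 : ∀ y z, F ξ y z = 0 := by
    intro y z
    have := congrFun (congrFun (congrFun h1 ξ) y) z
    simpa [F1, etaxi hacm] using this
  have hxi2 : ∀ x z, F x ξ z = 0 := by
    intro x z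
    have h3 : F x ξ ξ = 0 := by have := hanti x ξ ξ; linarith
    have := congrFun (congrFun (congrFun h2 x) ξ) z
    simp only [F2, etaxi hacm, one_mul, h3, Pi.zero_apply] at this
    linarith [this]
  refine ⟨htri, fun x y z => by linarith [hanti x y z], fun x y z => ?_, hxi1, hxi2⟩
  · have hr := hrel x y z
    have h3 : ∀ a b, F a b ξ = 0 := fun a b => by
      have := hanti a ξ b; rw [hxi2] at this; linarith
    rw [hxi2, h3, mul_zero, mul_zero] at hr
    linarith

lemma good_memHF (hacm : ACM n φ ξ η) (h : Good φ ξ F) : MemHF φ ξ η F := by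
  refine ⟨⟨h.tri, fun x y z => by rw [h.anti x y z]; ring_nf,
    fun x y z => by rw [h.rel, h.xi2, h.xi3]; ring⟩, ?_, ?_⟩
  · funext x y z; simp [F1, h.xi1]
  · funext x y z; simp [F2, h.xi2]

lemma good_inF (hacm : ACM n φ ξ η) (h : Good φ ξ F) : InF φ ξ η F :=
  (good_memHF hacm h).1

variable (hacm : ACM n φ ξ η)
include hacm

/-- slot-1 expansion of φ². -/
lemma gphiphi1 (h : Good φ ξ F) (x y z : V) : F (φ (φ x)) y z = -F x y z := by
  rw [phiphi hacm, t_add1 h.tri, t_neg1 h.tri, t_smul1 h.tri, h.xi1]; ring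
lemma gphiphi2 (h : Good φ ξ F) (x y z : V) : F x (φ (φ y)) z = -F x y z := by
  rw [phiphi hacm, t_add2 h.tri, t_neg2 h.tri, t_smul2 h.tri, h.xi2]; ring
lemma gphiphi3 (h : Good φ ξ F) (x y z : V) : F x y (φ (φ z)) = -F x y z := by
  rw [phiphi hacm, t_add3 h.tri, t_neg3 h.tri, t_smul3 h.tri, h.xi3]; ring

lemma gh1 (h : Good φ ξ F) (x y z : V) : F (hMap φ x) y z = F x y z := by
  rw [hMap_eq hacm, t_sub1 h.tri, t_smul1 h.tri, h.xi1]; ring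
lemma gh2 (h : Good φ ξ F) (x y z : V) : F x (hMap φ y) z = F x y z := by
  rw [hMap_eq hacm, t_sub2 h.tri, t_smul2 h.tri, h.xi2]; ring
lemma gh3 (h : Good φ ξ F) (x y z : V) : F x y (hMap φ z) = F x y z := by
  rw [hMap_eq hacm, t_sub3 h.tri, t_smul3 h.tri, h.xi3]; ring

lemma good_hF_eq (h : Good φ ξ F) : hF φ F = F := by
  funext x y z; rw [hF, gh1 hacm h, gh2 hacm h, gh3 hacm h]

/-- move φ between slots 2 and 3: F x (φ y) z = F x y (φ z). -/
lemma gmove (h : Good φ ξ F) (x y z : V) : F x (φ y) z = F x y (φ z) := by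
  have h1 := h.rel x y (φ z)
  rw [gphiphi3 hacm h] at h1
  linarith

end GoodBasic

end St18
namespace St18
variable {n : ℕ} {φ : V →ₗ[ℝ] V} {ξ : V} {η : V →ₗ[ℝ] ℝ} {F G : V → V → V → ℝ}

/-- The operator `T : F ↦ F(φ·, φ·, ·)`. -/
def TT (φ : V →ₗ[ℝ] V) (F : V → V → V → ℝ) : V → V → V → ℝ :=
  fun x y z => F (φ x) (φ y) z

/-- The cyclic sum. -/
def SS (F : V → V → V → ℝ) : V → V → V → ℝ :=
  fun x y z => F x y z + F y z x + F z x y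

/-- Alternating (totally antisymmetric). -/
def Alt (F : V → V → V → ℝ) : Prop :=
  (∀ x y z, F x z y = -F x y z) ∧ (∀ x y z, F y x z = -F x y z)

lemma Alt.cyc (h : Alt F) (x y z : V) : F y z x = F x y z := by
  have a1 := h.1 y x z
  have a2 := h.2 x y z
  linarith

lemma SS_alt (hanti : ∀ x y z, F x z y = -F x y z) : Alt (SS F) := by
  constructor <;> intro x y z <;> simp only [SS] <;>
    rw [hanti x y z, hanti z y x, hanti y x z] <;> ring

lemma SS_of_alt (h : Alt F) (x y z : V) : SS F x y z = 3 * F x y z := by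
  simp only [SS]; rw [h.cyc y z x, h.cyc, h.cyc y z x, h.cyc]; ring

section WithAcm
variable (hacm : ACM n φ ξ η)
include hacm

lemma good_TT (h : Good φ ξ F) : Good φ ξ (TT φ F) := by
  refine ⟨⟨?_, ?_, ?_⟩, ?_, ?_, ?_, ?_⟩
  · intro y z; constructor <;> intros <;>
      simp only [TT, map_add, map_smul, smul_eq_mul, t_add1 h.tri, t_smul1 h.tri]
  · intro x z; constructor <;> intros <;>
      simp only [TT, map_add, map_smul, smul_eq_mul, t_add2 h.tri, t_smul2 h.tri]
  · intro x y; constructor <;> intros <;>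
      simp only [TT, smul_eq_mul, t_add3 h.tri, t_smul3 h.tri]
  · -- antisymmetry in last two slots
    intro x y z; simp only [TT]
    rw [gmove hacm h (φ x) z y]
    exact h.anti (φ x) (φ y) z
  · -- relation
    intro x y z; simp only [TT]
    rw [gphiphi2 hacm h (φ x) y (φ z), ← gmove hacm h (φ x) y z]
  · intro y z; simp only [TT, phixi hacm, t_zero1 h.tri]
  · intro x z; simp only [TT, phixi hacm, t_zero2 h.tri]

lemma TT_TT (h : Good φ ξ F) (x y z : V) : TT φ (TT φ F) x y z = F x y z := by
  simp only [TT]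
  rw [gphiphi1 hacm h, gphiphi2 hacm h]; ring

/-- T of an alternating Good form is its negative. -/
lemma alt_TT_neg (h : Good φ ξ F) (halt : Alt F) (x y z : V) :
    TT φ F x y z = -F x y z := by
  simp only [TT]
  rw [halt.cyc z (φ x) (φ y), h.rel z x y, ← halt.cyc z x y]

/-- key identity: (SS F)(φx, φy, z) = TTF x y z + TTF y z x - F z x y. -/
lemma SS_TT (h : Good φ ξ F) (x y z : V) :
    SS F (φ x) (φ y) z = TT φ F x y z + TT φ F y z x - F z x y := by
  simp only [SS, TT]
  have h1 : F (φ y) z (φ x) = F (φ y) (φ z) x := (gmove hacm h (φ y) z x).symm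
  have h2 : F z (φ x) (φ y) = -F z x y := h.rel z x y
  rw [h1, h2]; ring

end WithAcm
end St18
namespace St18
variable {n : ℕ} {φ : V →ₗ[ℝ] V} {ξ : V} {η : V →ₗ[ℝ] ℝ} {F G : V → V → V → ℝ}
variable {ι : Type*} [Fintype ι]

/-- expand a linear functional against an orthonormal basis. -/
lemma sum_inner_lin (e : OrthonormalBasis ι ℝ V) {G : V → ℝ} (hG : IsLinearMap ℝ G) (v : V) :
    ∑ i, ⟪v, e i⟫ * G (e i) = G v := by
  have hcalc : G v = ∑ i, ⟪v, e i⟫ * G (e i) := by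
    calc G v = G (∑ i, ⟪e i, v⟫ • e i) := by rw [e.sum_repr' v]
      _ = ∑ i, G (⟪e i, v⟫ • e i) := map_sum (IsLinearMap.mk' G hG) _ _
      _ = ∑ i, ⟪v, e i⟫ * G (e i) := Finset.sum_congr rfl fun i _ => by
          rw [hG.2, smul_eq_mul, real_inner_comm]
  exact hcalc.symm

lemma parseval (e : OrthonormalBasis ι ℝ V) (v w : V) :
    ∑ i, ⟪v, e i⟫ * ⟪w, e i⟫ = ⟪v, w⟫ := by
  have hG : IsLinearMap ℝ (fun u => ⟪w, u⟫) :=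
    ⟨fun a b => inner_add_right w a b, fun c a => by
      simp [inner_smul_right]⟩
  have := sum_inner_lin e hG v
  simpa [real_inner_comm] using this

/-- master swap lemma for bilinear maps. -/
lemma swap_phi_B (hacm : ACM n φ ξ η) (e : OrthonormalBasis ι ℝ V) (B : V → V → ℝ)
    (h1 : ∀ v, IsLinearMap ℝ (fun u => B u v)) (h2 : ∀ u, IsLinearMap ℝ (B u)) :
    ∑ i, B (φ (e i)) (e i) = -∑ i, B (e i) (φ (e i)) := by
  have step1 : ∀ i, B (φ (e i)) (e i) = ∑ j, ⟪φ (e i), e j⟫ * B (e j) (e i) := by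
    intro i
    exact (sum_inner_lin e (h1 (e i)) (φ (e i))).symm
  calc ∑ i, B (φ (e i)) (e i) = ∑ i, ∑ j, ⟪φ (e i), e j⟫ * B (e j) (e i) := by
        exact Finset.sum_congr rfl fun i _ => step1 i
    _ = ∑ j, ∑ i, ⟪φ (e i), e j⟫ * B (e j) (e i) := Finset.sum_comm
    _ = ∑ j, ∑ i, -(⟪φ (e j), e i⟫ * B (e j) (e i)) := by
        refine Finset.sum_congr rfl fun j _ => Finset.sum_congr rfl fun i _ => ?_
        rw [skew hacm, real_inner_comm]; ring
    _ = -∑ j, ∑ i, ⟪φ (e j), e i⟫ * B (e j) (e i) := by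
        rw [← Finset.sum_neg_distrib]
        exact Finset.sum_congr rfl fun j _ => by rw [Finset.sum_neg_distrib]
    _ = -∑ j, B (e j) (φ (e j)) := by
        congr 1
        exact Finset.sum_congr rfl fun j _ => sum_inner_lin e (h2 (e j)) (φ (e j))

/-- trace of a bilinear map is invariant under an isometry. -/
lemma trace_isometry (e : OrthonormalBasis ι ℝ V) (A : V ≃ₗᵢ[ℝ] V) (B : V → V → ℝ)
    (h1 : ∀ v, IsLinearMap ℝ (fun u => B u v)) (h2 : ∀ u, IsLinearMap ℝ (B u)) :
    ∑ i, B (A.symm (e i)) (A.symm (e i)) = ∑ i, B (e i) (e i) := by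
  have step1 : ∀ i, B (A.symm (e i)) (A.symm (e i)) =
      ∑ j, ⟪A.symm (e i), e j⟫ * B (e j) (A.symm (e i)) := fun i =>
    (sum_inner_lin e (h1 (A.symm (e i))) (A.symm (e i))).symm
  calc ∑ i, B (A.symm (e i)) (A.symm (e i))
      = ∑ i, ∑ j, ⟪A.symm (e i), e j⟫ * B (e j) (A.symm (e i)) :=
        Finset.sum_congr rfl fun i _ => step1 i
    _ = ∑ j, ∑ i, ⟪A (e j), e i⟫ * B (e j) (A.symm (e i)) := by
        rw [Finset.sum_comm]
        refine Finset.sum_congr rfl fun j _ => Finset.sum_congr rfl fun i _ => ?_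
        congr 1
        rw [← A.inner_map_map (A.symm (e i)) (e j), A.apply_symm_apply, real_inner_comm]
    _ = ∑ j, B (e j) (A.symm (A (e j))) := by
        refine Finset.sum_congr rfl fun j _ => ?_
        have hB : IsLinearMap ℝ (fun u => B (e j) (A.symm u)) :=
          ⟨fun a b => by rw [map_add, (h2 (e j)).map_add],
           fun c a => by rw [map_smul, (h2 (e j)).map_smul]⟩
        exact sum_inner_lin e hB (A (e j))
    _ = ∑ j, B (e j) (e j) := by
        refine Finset.sum_congr rfl fun j _ => ?_
        rw [A.symm_apply_apply]

section FTr
variable (e : OrthonormalBasis ι ℝ V)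

lemma fTr_lin (h : Trilinear F) : IsLinearMap ℝ (fTr e F) := by
  constructor
  · intro a b; simp only [fTr, t_add3 h, Finset.sum_add_distrib]
  · intro c a; simp only [fTr, t_smul3 h, smul_eq_mul, Finset.mul_sum]

lemma fTr_zero (h : Trilinear F) : fTr e F 0 = 0 := by
  simp only [fTr, t_zero3 h, Finset.sum_const_zero]

lemma fTr_add (h : Trilinear F) (a b : V) : fTr e F (a + b) = fTr e F a + fTr e F b :=
  (fTr_lin e h).map_add a b

variable (hacm : ACM n φ ξ η)
include hacm

lemma fTr_xi (h : Good φ ξ F) : fTr e F ξ = 0 := by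
  simp only [fTr, h.xi3, Finset.sum_const_zero]

lemma fTr_phiphi (h : Good φ ξ F) (z : V) : fTr e F (φ (φ z)) = -fTr e F z := by
  simp only [fTr, gphiphi3 hacm h, Finset.sum_neg_distrib]

lemma fTr_h (h : Good φ ξ F) (z : V) : fTr e F (hMap φ z) = fTr e F z := by
  simp only [fTr, gh3 hacm h]

lemma fTr_phixi (h : Good φ ξ F) : fTr e F (φ ξ) = 0 := by
  rw [phixi hacm]; simp only [fTr, t_zero3 h.tri, Finset.sum_const_zero]

/-- trace of TT F equals trace of F. -/
lemma fTr_TT (h : Good φ ξ F) (z : V) : fTr e (TT φ F) z = fTr e F z := by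
  have hB1 : ∀ v, IsLinearMap ℝ (fun u => F u (φ v) z) :=
    fun v => ⟨fun a b => t_add1 h.tri a b _ _, fun c a => t_smul1 h.tri c a _ _⟩
  have hB2 : ∀ u, IsLinearMap ℝ (fun v => F u (φ v) z) :=
    fun u => ⟨fun a b => by rw [map_add, t_add2 h.tri],
              fun c a => by rw [map_smul, t_smul2 h.tri, smul_eq_mul]⟩
  have key := swap_phi_B hacm e (fun u v => F u (φ v) z) hB1 hB2
  simp only [TT, fTr]
  calc ∑ i, F (φ (e i)) (φ (e i)) z = -∑ i, F (e i) (φ (φ (e i))) z := key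
    _ = ∑ i, F (e i) (e i) z := by
        rw [← Finset.sum_neg_distrib]
        exact Finset.sum_congr rfl fun i _ => by rw [gphiphi2 hacm h]; ring

end FTr
end St18
namespace St18
variable {n : ℕ} {φ : V →ₗ[ℝ] V} {ξ : V} {η : V →ₗ[ℝ] ℝ} {F G : V → V → V → ℝ}

lemma hMap_add (x y : V) : hMap φ (x + y) = hMap φ x + hMap φ y := by
  simp [hMap, map_add]; abel

lemma hMap_smul (c : ℝ) (x : V) : hMap φ (c • x) = c • hMap φ x := by
  simp [hMap, map_smul]

lemma inner_phi_self (hacm : ACM n φ ξ η) (x : V) : ⟪x, φ x⟫ = 0 := by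
  have h1 := skew hacm x x
  have h2 : ⟪φ x, x⟫ = ⟪x, φ x⟫ := real_inner_comm _ _
  linarith

section E
variable (e : OrthonormalBasis (Fin (2 * n + 1)) ℝ V)
variable (hacm : ACM n φ ξ η)
include hacm

lemma sum_h_diag : ∑ i, ⟪hMap φ (e i), hMap φ (e i)⟫ = 2 * (n : ℝ) := by
  have h1 : ∀ i, ⟪hMap φ (e i), hMap φ (e i)⟫ = 1 - ⟪ξ, e i⟫ * ⟪ξ, e i⟫ := by
    intro i
    rw [inner_h_h hacm, ← xi_inner hacm (e i), real_inner_comm (e i) ξ]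
    have : ⟪e i, e i⟫ = 1 := by
      have hnorm := e.orthonormal.1 i
      rw [real_inner_self_eq_norm_mul_norm, hnorm]; norm_num
    rw [this]
  simp only [h1]
  rw [Finset.sum_sub_distrib, parseval e ξ ξ, xixi hacm, Finset.sum_const]
  simp only [Finset.card_univ, Fintype.card_fin, nsmul_eq_mul, mul_one]
  push_cast; ring

lemma sum_h_fTr (h : Good φ ξ F) (z : V) :
    ∑ i, ⟪hMap φ (e i), hMap φ z⟫ * fTr e F (e i) = fTr e F z := by
  have h1 : ∀ i, ⟪hMap φ (e i), hMap φ z⟫ = ⟪hMap φ z, e i⟫ := by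
    intro i
    rw [inner_h_h hacm, real_inner_comm, inner_h_left hacm, real_inner_comm]; ring
  simp only [h1]
  rw [sum_inner_lin e (fTr_lin e h.tri) (hMap φ z), fTr_h e hacm h]

lemma sum_phi_fTr (h : Good φ ξ F) (z : V) :
    ∑ i, ⟪e i, φ z⟫ * fTr e F (φ (e i)) = -fTr e F z := by
  have hG : IsLinearMap ℝ (fun u => fTr e F (φ u)) :=
    ⟨fun a b => by rw [map_add, fTr_add e h.tri],
     fun c a => by rw [map_smul, (fTr_lin e h.tri).2, smul_eq_mul]⟩
  have h1 : ∀ i, ⟪e i, φ z⟫ = ⟪φ z, e i⟫ := fun i => real_inner_comm _ _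
  simp only [h1]
  rw [sum_inner_lin e hG (φ z), fTr_phiphi e hacm h]

/-- Key trace identity : `f(F₉(F)) = f(F)`. -/
lemma fTr_F9 (hn : 2 ≤ n) (h : Good φ ξ F) (z : V) :
    fTr e (F9 n φ e F) z = fTr e F z := by
  have hne : (n : ℝ) - 1 ≠ 0 := by
    have : (2 : ℝ) ≤ (n : ℝ) := by exact_mod_cast hn
    intro hc; linarith
  have expand : fTr e (F9 n φ e F) z =
      (1 / (2 * ((n : ℝ) - 1))) *
        ((∑ i, ⟪hMap φ (e i), hMap φ (e i)⟫) * fTr e F z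
          - ∑ i, ⟪hMap φ (e i), hMap φ z⟫ * fTr e F (e i)
          - (∑ i, ⟪e i, φ (e i)⟫) * fTr e F (φ z)
          + ∑ i, ⟪e i, φ z⟫ * fTr e F (φ (e i))) := by
    simp only [fTr, F9, mul_sub, mul_add]
    rw [Finset.sum_add_distrib, Finset.sum_sub_distrib, Finset.sum_sub_distrib,
      ← Finset.mul_sum, ← Finset.mul_sum, ← Finset.mul_sum, ← Finset.mul_sum,
      ← Finset.sum_mul, ← Finset.sum_mul]
  rw [expand, sum_h_diag e hacm, sum_h_fTr e hacm h z]
  have hz : ∑ i, ⟪e i, φ (e i)⟫ = 0 := by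
    simp only [inner_phi_self hacm, Finset.sum_const_zero]
  rw [hz, sum_phi_fTr e hacm h z]
  field_simp
  ring

end E
end St18
namespace St18
variable {n : ℕ} {φ : V →ₗ[ℝ] V} {ξ : V} {η : V →ₗ[ℝ] ℝ} {F G : V → V → V → ℝ}

lemma good_comb (hF : Good φ ξ F) (hG : Good φ ξ G) (a b : ℝ) :
    Good φ ξ (fun x y z => a * F x y z + b * G x y z) := by
  refine ⟨⟨?_, ?_, ?_⟩, ?_, ?_, ?_, ?_⟩
  · intro y z; constructor <;> intros <;>
      simp only [t_add1 hF.tri, t_add1 hG.tri, t_smul1 hF.tri, t_smul1 hG.tri,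
        smul_eq_mul] <;> ring
  · intro x z; constructor <;> intros <;>
      simp only [t_add2 hF.tri, t_add2 hG.tri, t_smul2 hF.tri, t_smul2 hG.tri,
        smul_eq_mul] <;> ring
  · intro x y; constructor <;> intros <;>
      simp only [t_add3 hF.tri, t_add3 hG.tri, t_smul3 hF.tri, t_smul3 hG.tri,
        smul_eq_mul] <;> ring
  · intro x y z; dsimp only; rw [hF.anti x y z, hG.anti x y z]; ring
  · intro x y z; dsimp only; rw [hF.rel x y z, hG.rel x y z]; ring
  · intro y z; dsimp only; rw [hF.xi1, hG.xi1]; ring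
  · intro x z; dsimp only; rw [hF.xi2, hG.xi2]; ring

lemma alt_comb {F G : V → V → V → ℝ} (hF : Alt F) (hG : Alt G) (a b : ℝ) :
    Alt (fun x y z => a * F x y z + b * G x y z) := by
  constructor <;> intro x y z <;> dsimp only
  · rw [hF.1 x y z, hG.1 x y z]; ring
  · rw [hF.2 x y z, hG.2 x y z]; ring

lemma F10_eq (x y z : V) :
    F10 φ F x y z = (1/2) * F x y z + (1/2) * TT φ F x y z := by
  simp only [F10, TT]; ring

lemma F12_eq (x y z : V) :
    F12 φ F x y z = (1/2) * F x y z + (-(1/2)) * TT φ F x y z := by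
  simp only [F12, TT]; ring

lemma F11_eq (x y z : V) :
    F11 φ F x y z = (1/6) * (SS F x y z - SS (TT φ F) x y z) := by
  simp only [F11, SS, TT]; ring

lemma F11_eq_SS_F12 (x y z : V) :
    F11 φ F x y z = (1/3) * SS (F12 φ F) x y z := by
  simp only [F11, SS, F12, TT]; ring

section WithAcm
variable (hacm : ACM n φ ξ η)
include hacm

lemma good_F10 (h : Good φ ξ F) : Good φ ξ (F10 φ F) := by
  have := good_comb h (good_TT hacm h) (1/2) (1/2)
  convert this using 1
  funext x y z; exact F10_eq x y z

lemma good_F12 (h : Good φ ξ F) : Good φ ξ (F12 φ F) := by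
  have := good_comb h (good_TT hacm h) (1/2) (-(1/2))
  convert this using 1
  funext x y z; exact F12_eq x y z

lemma TT_F10 (h : Good φ ξ F) (x y z : V) : TT φ (F10 φ F) x y z = F10 φ F x y z := by
  simp only [TT, F10]
  rw [gphiphi1 hacm h, gphiphi2 hacm h]; ring

lemma TT_F12 (h : Good φ ξ F) (x y z : V) : TT φ (F12 φ F) x y z = -F12 φ F x y z := by
  simp only [TT, F12]
  rw [gphiphi1 hacm h, gphiphi2 hacm h]; ring

lemma alt_F11 (h : Good φ ξ F) : Alt (F11 φ F) := by
  have h1 : Alt (SS F) := SS_alt h.anti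
  have h2 : Alt (SS (TT φ F)) := SS_alt (good_TT hacm h).anti
  have := alt_comb h1 h2 (1/6) (-(1/6))
  constructor <;> intro x y z
  · rw [F11_eq, F11_eq]; rw [h1.1 x y z, h2.1 x y z]; ring
  · rw [F11_eq, F11_eq]; rw [h1.2 x y z, h2.2 x y z]; ring

lemma TT_F11 (h : Good φ ξ F) (x y z : V) : TT φ (F11 φ F) x y z = -F11 φ F x y z := by
  have hg12 : Good φ ξ (F12 φ F) := good_F12 hacm h
  have key := SS_TT hacm hg12 x y z
  have e2 := TT_F12 hacm h x y z
  have e3 := TT_F12 hacm h y z x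
  simp only [TT] at key e2 e3 ⊢
  rw [F11_eq_SS_F12, key, e2, e3, F11_eq_SS_F12]
  simp only [SS]; ring

lemma good_F11 (h : Good φ ξ F) : Good φ ξ (F11 φ F) := by
  have halt := alt_F11 hacm h
  refine ⟨⟨?_, ?_, ?_⟩, halt.1, ?_, ?_, ?_⟩
  · intro y z; constructor <;> intros <;>
      simp only [F11, map_add, map_smul, t_add1 h.tri, t_add2 h.tri, t_add3 h.tri,
        t_smul1 h.tri, t_smul2 h.tri, t_smul3 h.tri, smul_eq_mul] <;> ring
  · intro x z; constructor <;> intros <;>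
      simp only [F11, map_add, map_smul, t_add1 h.tri, t_add2 h.tri, t_add3 h.tri,
        t_smul1 h.tri, t_smul2 h.tri, t_smul3 h.tri, smul_eq_mul] <;> ring
  · intro x y; constructor <;> intros <;>
      simp only [F11, map_add, map_smul, t_add1 h.tri, t_add2 h.tri, t_add3 h.tri,
        t_smul1 h.tri, t_smul2 h.tri, t_smul3 h.tri, smul_eq_mul] <;> ring
  · -- relation
    intro x y z
    have c1 : F11 φ F x (φ y) (φ z) = F11 φ F (φ y) (φ z) x := (halt.cyc x (φ y) (φ z)).symm
    rw [c1]
    have c2 := TT_F11 hacm h y z x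
    simp only [TT] at c2
    rw [c2, halt.cyc x y z]
  · intro y z
    simp only [F11, h.xi1, h.xi2, h.xi3, phixi hacm, t_zero1 h.tri, t_zero2 h.tri,
      t_zero3 h.tri]
    ring
  · intro x z
    simp only [F11, h.xi1, h.xi2, h.xi3, phixi hacm, t_zero1 h.tri, t_zero2 h.tri,
      t_zero3 h.tri]
    ring

lemma F11_F11 (h : Good φ ξ F) (x y z : V) : F11 φ (F11 φ F) x y z = F11 φ F x y z := by
  have halt := alt_F11 hacm h
  rw [F11_eq]
  have hTT : ∀ a b c, SS (TT φ (F11 φ F)) a b c = -SS (F11 φ F) a b c := by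
    intro a b c
    simp only [SS]
    rw [TT_F11 hacm h, TT_F11 hacm h, TT_F11 hacm h]; ring
  rw [hTT, SS_of_alt halt]; ring

-- inner product identities used for F9
lemma i_h_hphi (x y : V) : ⟪hMap φ x, hMap φ (φ y)⟫ = ⟪x, φ y⟫ := by
  rw [hMap_phi hacm, real_inner_comm, inner_h_right hacm, etaphi hacm, real_inner_comm]; ring

lemma i_hphi_h (x y : V) : ⟪hMap φ (φ x), hMap φ y⟫ = -⟪x, φ y⟫ := by
  rw [hMap_phi hacm, inner_h_right hacm, etaphi hacm, skew hacm]; ring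

lemma i_x_phiphi (x y : V) : ⟪x, φ (φ y)⟫ = -⟪hMap φ x, hMap φ y⟫ := by
  rw [inner_phiphi_right hacm, inner_h_h hacm]

lemma i_phi_phiphi (x y : V) : ⟪φ x, φ (φ y)⟫ = ⟪x, φ y⟫ := by
  rw [inner_phi_phi hacm, etaphi hacm]; ring

lemma i_phi_phi (x y : V) : ⟪φ x, φ y⟫ = ⟪hMap φ x, hMap φ y⟫ := by
  rw [inner_phi_phi hacm, inner_h_h hacm]

end WithAcm
end St18
namespace St18
variable {n : ℕ} {φ : V →ₗ[ℝ] V} {ξ : V} {η : V →ₗ[ℝ] ℝ} {F G : V → V → V → ℝ}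

section E9
variable (e : OrthonormalBasis (Fin (2 * n + 1)) ℝ V)

lemma fTr_alt (h : Alt F) (z : V) : fTr e F z = 0 := by
  have : ∀ i, F (e i) (e i) z = 0 := by
    intro i
    have := h.2 (e i) (e i) z
    linarith
  simp only [fTr, this, Finset.sum_const_zero]

lemma F9_congr (hfg : ∀ w, fTr e F w = fTr e G w) (x y z : V) :
    F9 n φ e F x y z = F9 n φ e G x y z := by
  simp only [F9, hfg]

variable (hacm : ACM n φ ξ η)
include hacm

lemma F9_anti (x y z : V) : F9 n φ e F x z y = -F9 n φ e F x y z := by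
  simp only [F9]; ring

lemma F9_xi1 (h : Good φ ξ F) (y z : V) : F9 n φ e F ξ y z = 0 := by
  simp only [F9, hMap_xi hacm, inner_zero_left, inner_phi_xi hacm]; ring

lemma F9_xi2 (h : Good φ ξ F) (x z : V) : F9 n φ e F x ξ z = 0 := by
  simp only [F9, hMap_xi hacm, inner_zero_right, phixi hacm, fTr_xi e hacm h,
    fTr_zero e h.tri]
  ring

lemma F9_rel (h : Good φ ξ F) (x y z : V) :
    F9 n φ e F x (φ y) (φ z) = -F9 n φ e F x y z := by
  simp only [F9]
  rw [i_h_hphi hacm x y, i_h_hphi hacm x z, i_x_phiphi hacm x y, i_x_phiphi hacm x z,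
    fTr_phiphi e hacm h, fTr_phiphi e hacm h]
  ring

lemma F9_TT (h : Good φ ξ F) (x y z : V) :
    F9 n φ e F (φ x) (φ y) z = F9 n φ e F x y z := by
  have t2 : ⟪hMap φ (φ x), hMap φ z⟫ = -⟪x, φ z⟫ := i_hphi_h hacm x z
  simp only [F9]
  rw [t2, hMap_phi hacm x, hMap_phi hacm y, i_phi_phi hacm x y, i_phi_phiphi hacm x y,
    i_phi_phi hacm x z, fTr_phiphi e hacm h y]
  ring

lemma good_F9 (h : Good φ ξ F) : Good φ ξ (F9 n φ e F) := by
  refine ⟨⟨?_, ?_, ?_⟩, fun x y z => F9_anti e hacm x y z, fun x y z => F9_rel e hacm h x y z,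
    fun y z => F9_xi1 e hacm h y z, fun x z => F9_xi2 e hacm h x z⟩
  · intro y z; constructor <;> intros <;>
      simp only [F9, hMap_add, hMap_smul, inner_add_left, inner_smul_left, map_add, map_smul,
        RCLike.star_def, conj_trivial, smul_eq_mul] <;> ring
  · intro x z; constructor <;> intros <;>
      simp only [F9, hMap_add, hMap_smul, inner_add_left, inner_add_right, inner_smul_left,
        inner_smul_right, map_add, map_smul, fTr_add e h.tri, (fTr_lin e h.tri).2,
        RCLike.star_def, conj_trivial, smul_eq_mul] <;> ring
  · intro x y; constructor <;> intros <;>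
      simp only [F9, hMap_add, hMap_smul, inner_add_left, inner_add_right, inner_smul_left,
        inner_smul_right, map_add, map_smul, fTr_add e h.tri, (fTr_lin e h.tri).2,
        RCLike.star_def, conj_trivial, smul_eq_mul] <;> ring

end E9
end St18
namespace St18
variable {n : ℕ} {φ : V →ₗ[ℝ] V} {ξ : V} {η : V →ₗ[ℝ] ℝ} {F G : V → V → V → ℝ}

lemma good_congr (h : Good φ ξ F) (heq : ∀ x y z, F x y z = G x y z) : Good φ ξ G := by
  have hfg : F = G := funext fun x => funext fun y => funext fun z => heq x y z
  exact hfg ▸ h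

section D
variable (e : OrthonormalBasis (Fin (2 * n + 1)) ℝ V)
variable (hacm : ACM n φ ξ η)
include hacm

lemma good_of_inF_h (hInF : InF φ ξ η G) (hh : G = hF φ G) : Good φ ξ G := by
  obtain ⟨htri, hanti, hrel⟩ := hInF
  have hxi1 : ∀ y z, G ξ y z = 0 := by
    intro y z
    have h1 := congrFun (congrFun (congrFun hh ξ) y) z
    rw [h1]
    show G (hMap φ ξ) (hMap φ y) (hMap φ z) = 0
    rw [hMap_xi hacm, t_zero1 htri]
  have hxi2 : ∀ x z, G x ξ z = 0 := by
    intro x z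
    have h1 := congrFun (congrFun (congrFun hh x) ξ) z
    rw [h1]
    show G (hMap φ x) (hMap φ ξ) (hMap φ z) = 0
    rw [hMap_xi hacm, t_zero2 htri]
  have hxi3 : ∀ x y, G x y ξ = 0 := fun x y => by
    have := hanti x y ξ; rw [hxi2 x y] at this; linarith
  refine ⟨htri, fun x y z => by linarith [hanti x y z], fun x y z => ?_, hxi1, hxi2⟩
  have := hrel x y z
  rw [hxi2, hxi3, mul_zero, mul_zero, add_zero, add_zero] at this
  linarith

lemma fTr_F10 (h : Good φ ξ F) (w : V) : fTr e (F10 φ F) w = fTr e F w := by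
  have h1 : fTr e (F10 φ F) w =
      (1/2) * (fTr e F w + ∑ i, F (φ (e i)) (φ (e i)) w) := by
    simp only [fTr, F10, mul_add, Finset.sum_add_distrib, Finset.mul_sum]
  have h2 : ∑ i, F (φ (e i)) (φ (e i)) w = fTr e F w := by
    have := fTr_TT e hacm h w
    simpa [fTr, TT] using this
  rw [h1, h2]; ring

lemma fTr_F12 (h : Good φ ξ F) (w : V) : fTr e (F12 φ F) w = 0 := by
  have h1 : fTr e (F12 φ F) w =
      (1/2) * (fTr e F w - ∑ i, F (φ (e i)) (φ (e i)) w) := by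
    simp only [fTr, F12, mul_sub, Finset.sum_sub_distrib, Finset.mul_sum]
  have h2 : ∑ i, F (φ (e i)) (φ (e i)) w = fTr e F w := by
    have := fTr_TT e hacm h w
    simpa [fTr, TT] using this
  rw [h1, h2]; ring

lemma F9_zero_of_fTr (hzero : ∀ w, fTr e F w = 0) (x y z : V) :
    F9 n φ e F x y z = 0 := by
  simp only [F9, hzero]; ring

/-- membership of the first component. -/
lemma memF9_of (hn : 2 ≤ n) (h : Good φ ξ F) : MemF9sub n e φ ξ η (F9 n φ e F) := by
  have hg := good_F9 e hacm h
  refine ⟨good_inF hacm hg, (good_hF_eq hacm hg).symm, ?_⟩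
  funext x y z
  exact (F9_congr e (fun w => fTr_F9 e hacm hn h w) x y z).symm

/-- membership of the second component. -/
lemma memF10_of (hn : 2 ≤ n) (h : Good φ ξ F) :
    MemF10sub n e φ ξ η (fun x y z => F10 φ F x y z - F9 n φ e F x y z) := by
  set G : V → V → V → ℝ := fun x y z => F10 φ F x y z - F9 n φ e F x y z with hGdef
  have hg : Good φ ξ G := by
    refine good_congr (good_comb (good_F10 hacm h) (good_F9 e hacm h) 1 (-1)) ?_
    intro x y z; simp only [hGdef]; ring
  have hfTrG : ∀ w, fTr e G w = 0 := by
    intro w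
    have h1 : fTr e G w = fTr e (F10 φ F) w - fTr e (F9 n φ e F) w := by
      simp only [fTr, hGdef, Finset.sum_sub_distrib]
    rw [h1, fTr_F10 e hacm h, fTr_F9 e hacm hn h]; ring
  have hTTG : ∀ x y z, G (φ x) (φ y) z = G x y z := by
    intro x y z
    have h1 := TT_F10 hacm h x y z
    have h2 := F9_TT e hacm h x y z
    simp only [TT] at h1
    simp only [hGdef]
    rw [h1, h2]
  refine ⟨good_inF hacm hg, (good_hF_eq hacm hg).symm, ?_⟩
  funext x y z
  have h1 : F9 n φ e G x y z = 0 := F9_zero_of_fTr e hacm hfTrG x y z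
  have h2 : F10 φ G x y z = G x y z := by
    simp only [F10]; rw [hTTG x y z]; ring
  show G x y z = F10 φ G x y z - F9 n φ e G x y z
  rw [h1, h2]; ring

/-- membership of the third component. -/
lemma memF11_of (h : Good φ ξ F) : MemF11sub φ ξ η (F11 φ F) := by
  have hg := good_F11 hacm h
  refine ⟨good_inF hacm hg, (good_hF_eq hacm hg).symm, ?_⟩
  funext x y z
  exact (F11_F11 hacm h x y z).symm

/-- membership of the fourth component. -/
lemma memF12_of (h : Good φ ξ F) :
    MemF12sub φ ξ η (fun x y z => F12 φ F x y z - F11 φ F x y z) := by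
  set G : V → V → V → ℝ := fun x y z => F12 φ F x y z - F11 φ F x y z with hGdef
  have hg : Good φ ξ G := by
    refine good_congr (good_comb (good_F12 hacm h) (good_F11 hacm h) 1 (-1)) ?_
    intro x y z; simp only [hGdef]; ring
  have hTTG : ∀ x y z, G (φ x) (φ y) z = -G x y z := by
    intro x y z
    have h1 := TT_F12 hacm h x y z
    have h2 := TT_F11 hacm h x y z
    simp only [TT] at h1 h2
    simp only [hGdef]
    rw [h1, h2]; ring
  have hSSG : ∀ x y z, SS G x y z = 0 := by
    intro x y z
    have e1 : SS G x y z = SS (F12 φ F) x y z - SS (F11 φ F) x y z := by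
      simp only [SS, hGdef]; ring
    have e2 : SS (F12 φ F) x y z = 3 * F11 φ F x y z := by
      have := F11_eq_SS_F12 (φ := φ) (F := F) x y z
      linarith
    have e3 : SS (F11 φ F) x y z = 3 * F11 φ F x y z := SS_of_alt (alt_F11 hacm h) x y z
    rw [e1, e2, e3]; ring
  have hF11G : ∀ x y z, F11 φ G x y z = 0 := by
    intro x y z
    have h1 : F11 φ G x y z = (1/3) * SS G x y z := by
      simp only [F11_eq]
      have a1 := hTTG x y z
      have a2 := hTTG y z x
      have a3 := hTTG z x y
      simp only [SS, TT]
      rw [a1, a2, a3]; ring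
    rw [h1, hSSG]; ring
  refine ⟨good_inF hacm hg, (good_hF_eq hacm hg).symm, ?_⟩
  funext x y z
  have h2 : F12 φ G x y z = G x y z := by
    simp only [F12]; rw [hTTG x y z]; ring
  show G x y z = F12 φ G x y z - F11 φ G x y z
  rw [h2, hF11G]; ring

end D
end St18
namespace St18
variable {n : ℕ} {φ : V →ₗ[ℝ] V} {ξ : V} {η : V →ₗ[ℝ] ℝ} {F G : V → V → V → ℝ}

section D2
variable (e : OrthonormalBasis (Fin (2 * n + 1)) ℝ V)
variable (hacm : ACM n φ ξ η)
include hacm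

/-- derived facts for a member of `𝔽₉`. -/
lemma d0 (hG : MemF9sub n e φ ξ η G) :
    Good φ ξ G ∧ (∀ x y z, G (φ x) (φ y) z = G x y z) ∧
    (∀ x y z, F9 n φ e G x y z = G x y z) ∧ (∀ x y z, F10 φ G x y z = G x y z) ∧
    (∀ x y z, F11 φ G x y z = 0) ∧ (∀ x y z, F12 φ G x y z = 0) := by
  obtain ⟨hInF, hh, h9⟩ := hG
  have hg : Good φ ξ G := good_of_inF_h hacm hInF hh
  have h9' : ∀ x y z, F9 n φ e G x y z = G x y z := fun x y z =>
    (congrFun (congrFun (congrFun h9 x) y) z).symm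
  have hTT : ∀ x y z, G (φ x) (φ y) z = G x y z := by
    intro x y z
    rw [← h9' (φ x) (φ y) z, F9_TT e hacm hg, h9']
  refine ⟨hg, hTT, h9', ?_, ?_, ?_⟩
  · intro x y z; simp only [F10]; rw [hTT]; ring
  · intro x y z; simp only [F11]; rw [hTT x y z, hTT y z x, hTT z x y]; ring
  · intro x y z; simp only [F12]; rw [hTT]; ring

/-- derived facts for a member of `𝔽₁₀`. -/
lemma d1 (hn : 2 ≤ n) (hG : MemF10sub n e φ ξ η G) :
    Good φ ξ G ∧ (∀ x y z, G (φ x) (φ y) z = G x y z) ∧ (∀ w, fTr e G w = 0) ∧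
    (∀ x y z, F9 n φ e G x y z = 0) ∧ (∀ x y z, F10 φ G x y z = G x y z) ∧
    (∀ x y z, F11 φ G x y z = 0) ∧ (∀ x y z, F12 φ G x y z = 0) := by
  obtain ⟨hInF, hh, heq⟩ := hG
  have hg : Good φ ξ G := good_of_inF_h hacm hInF hh
  have heq' : ∀ x y z, G x y z = F10 φ G x y z - F9 n φ e G x y z := fun x y z =>
    congrFun (congrFun (congrFun heq x) y) z
  have hfTr : ∀ w, fTr e G w = 0 := by
    intro w
    have h1 : fTr e G w = fTr e (F10 φ G) w - fTr e (F9 n φ e G) w := by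
      have : ∀ i : Fin (2*n+1), G (e i) (e i) w
          = F10 φ G (e i) (e i) w - F9 n φ e G (e i) (e i) w := fun i => heq' (e i) (e i) w
      simp only [fTr, this, Finset.sum_sub_distrib]
    have h2 := fTr_F10 e hacm hg w
    have h3 := fTr_F9 e hacm hn hg w
    rw [h2, h3] at h1
    linarith
  have h9 : ∀ x y z, F9 n φ e G x y z = 0 := F9_zero_of_fTr e hacm hfTr
  have h10 : ∀ x y z, F10 φ G x y z = G x y z := by
    intro x y z
    have := heq' x y z
    rw [h9] at this
    linarith
  have hTT : ∀ x y z, G (φ x) (φ y) z = G x y z := by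
    intro x y z
    have h1 := h10 x y z
    simp only [F10] at h1
    linarith
  refine ⟨hg, hTT, hfTr, h9, h10, ?_, ?_⟩
  · intro x y z; simp only [F11]; rw [hTT x y z, hTT y z x, hTT z x y]; ring
  · intro x y z; simp only [F12]; rw [hTT]; ring

/-- derived facts for a member of `𝔽₁₁`. -/
lemma d2 (hG : MemF11sub φ ξ η G) :
    Good φ ξ G ∧ Alt G ∧ (∀ x y z, G (φ x) (φ y) z = -G x y z) ∧ (∀ w, fTr e G w = 0) ∧
    (∀ x y z, F9 n φ e G x y z = 0) ∧ (∀ x y z, F10 φ G x y z = 0) ∧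
    (∀ x y z, F11 φ G x y z = G x y z) ∧ (∀ x y z, F12 φ G x y z = G x y z) := by
  obtain ⟨hInF, hh, heq⟩ := hG
  have hg : Good φ ξ G := good_of_inF_h hacm hInF hh
  have halt : Alt G := by
    rw [heq]; exact alt_F11 hacm hg
  have hTT : ∀ x y z, G (φ x) (φ y) z = -G x y z := by
    intro x y z
    have := alt_TT_neg hacm hg halt x y z
    simpa [TT] using this
  have hfTr : ∀ w, fTr e G w = 0 := fun w => fTr_alt e halt w
  have h11 : ∀ x y z, F11 φ G x y z = G x y z := by
    intro x y z
    simp only [F11]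
    rw [hTT x y z, hTT y z x, hTT z x y, halt.cyc x y z, halt.cyc z x y]
    ring
  refine ⟨hg, halt, hTT, hfTr, F9_zero_of_fTr e hacm hfTr, ?_, h11, ?_⟩
  · intro x y z; simp only [F10]; rw [hTT]; ring
  · intro x y z; simp only [F12]; rw [hTT]; ring

/-- derived facts for a member of `𝔽₁₂`. -/
lemma d3 (hG : MemF12sub φ ξ η G) :
    Good φ ξ G ∧ (∀ x y z, G (φ x) (φ y) z = -G x y z) ∧ (∀ x y z, SS G x y z = 0) ∧
    (∀ w, fTr e G w = 0) ∧
    (∀ x y z, F9 n φ e G x y z = 0) ∧ (∀ x y z, F10 φ G x y z = 0) ∧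
    (∀ x y z, F11 φ G x y z = 0) ∧ (∀ x y z, F12 φ G x y z = G x y z) := by
  obtain ⟨hInF, hh, heq⟩ := hG
  have hg : Good φ ξ G := good_of_inF_h hacm hInF hh
  have heq' : ∀ x y z, G x y z = F12 φ G x y z - F11 φ G x y z := fun x y z =>
    congrFun (congrFun (congrFun heq x) y) z
  have halt : Alt (F11 φ G) := alt_F11 hacm hg
  have hSS : ∀ x y z, SS G x y z = 0 := by
    intro x y z
    have e1 : SS G x y z = SS (F12 φ G) x y z - SS (F11 φ G) x y z := by
      simp only [SS]
      rw [heq' x y z, heq' y z x, heq' z x y]; ring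
    have e2 : SS (F12 φ G) x y z = 3 * F11 φ G x y z := by
      have := F11_eq_SS_F12 (φ := φ) (F := G) x y z
      linarith
    have e3 : SS (F11 φ G) x y z = 3 * F11 φ G x y z := SS_of_alt halt x y z
    rw [e1, e2, e3]; ring
  have hTT2 : ∀ x y z, G (φ x) (φ y) z = -G x y z - 2 * F11 φ G x y z := by
    intro x y z
    have h1 := heq' x y z
    simp only [F12] at h1
    linarith
  have h11 : ∀ x y z, F11 φ G x y z = 0 := by
    intro x y z
    have key := SS_TT hacm hg x y z
    simp only [TT] at key
    rw [hSS (φ x) (φ y) z] at key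
    rw [hTT2 x y z, hTT2 y z x] at key
    have hss := hSS x y z
    simp only [SS] at hss
    -- 0 = (-G xyz - 2 H xyz) + (-G yzx - 2 H yzx) - G zxy
    have hcyc : F11 φ G y z x = F11 φ G x y z := halt.cyc x y z
    rw [hcyc] at key
    linarith
  have hTT : ∀ x y z, G (φ x) (φ y) z = -G x y z := by
    intro x y z; rw [hTT2, h11]; ring
  have hfTr : ∀ w, fTr e G w = 0 := by
    intro w
    have h1 : fTr e G w = fTr e (F12 φ G) w - fTr e (F11 φ G) w := by
      have : ∀ i : Fin (2*n+1), G (e i) (e i) w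
          = F12 φ G (e i) (e i) w - F11 φ G (e i) (e i) w := fun i => heq' (e i) (e i) w
      simp only [fTr, this, Finset.sum_sub_distrib]
    have h2 : fTr e (F11 φ G) w = 0 := fTr_alt e halt w
    rw [h1, h2, fTr_F12 e hacm hg]; ring
  have h12 : ∀ x y z, F12 φ G x y z = G x y z := by
    intro x y z; simp only [F12]; rw [hTT]; ring
  refine ⟨hg, hTT, hSS, hfTr, F9_zero_of_fTr e hacm hfTr, ?_, h11, h12⟩
  · intro x y z; simp only [F10]; rw [hTT]; ring

end D2
end St18
namespace St18
variable {n : ℕ} {φ : V →ₗ[ℝ] V} {ξ : V} {η : V →ₗ[ℝ] ℝ} {F G : V → V → V → ℝ}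

lemma sum3_rot {ι : Type*} [Fintype ι] (h : ι → ι → ι → ℝ) :
    ∑ i, ∑ j, ∑ k, h i j k = ∑ i, ∑ j, ∑ k, h k i j := by
  rw [Finset.sum_comm]
  exact Finset.sum_congr rfl fun j _ => Finset.sum_comm

lemma sum3_rot2 {ι : Type*} [Fintype ι] (h : ι → ι → ι → ℝ) :
    ∑ i, ∑ j, ∑ k, h i j k = ∑ i, ∑ j, ∑ k, h j k i := by
  rw [sum3_rot, sum3_rot]

lemma innerF_comm {ι : Type*} [Fintype ι] (e : OrthonormalBasis ι ℝ V) :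
    innerF e F G = innerF e G F := by
  simp only [innerF, mul_comm]

section Orth
variable (e : OrthonormalBasis (Fin (2 * n + 1)) ℝ V)
variable (hacm : ACM n φ ξ η)
include hacm

/-- `⟨TF, G⟩ = ⟨F, TG⟩` in triple-sum form. -/
lemma inner_TT_swap (hFt : Trilinear F) (hGt : Trilinear G) :
    ∑ i, ∑ j, ∑ k, F (φ (e i)) (φ (e j)) (e k) * G (e i) (e j) (e k)
    = ∑ i, ∑ j, ∑ k, F (e i) (e j) (e k) * G (φ (e i)) (φ (e j)) (e k) := by
  have stepA : ∑ i, ∑ j, ∑ k, F (φ (e i)) (φ (e j)) (e k) * G (e i) (e j) (e k)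
      = -∑ i, ∑ j, ∑ k, F (e i) (φ (e j)) (e k) * G (φ (e i)) (e j) (e k) := by
    exact swap_phi_B hacm e (fun u v => ∑ j, ∑ k, F u (φ (e j)) (e k) * G v (e j) (e k))
      (fun v => ⟨fun a b => by
          simp only [t_add1 hFt, add_mul, Finset.sum_add_distrib],
        fun c a => by
          simp only [t_smul1 hFt, smul_eq_mul, mul_assoc, Finset.mul_sum]⟩)
      (fun u => ⟨fun a b => by
          simp only [t_add1 hGt, mul_add, Finset.sum_add_distrib],
        fun c a => by
          simp only [t_smul1 hGt, smul_eq_mul, Finset.mul_sum]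
          refine Finset.sum_congr rfl fun j _ => Finset.sum_congr rfl fun k _ => by ring⟩)
  have stepB : ∑ j, ∑ i, ∑ k, F (e i) (φ (e j)) (e k) * G (φ (e i)) (e j) (e k)
      = -∑ j, ∑ i, ∑ k, F (e i) (e j) (e k) * G (φ (e i)) (φ (e j)) (e k) := by
    exact swap_phi_B hacm e (fun u v => ∑ i, ∑ k, F (e i) u (e k) * G (φ (e i)) v (e k))
      (fun v => ⟨fun a b => by
          simp only [t_add2 hFt, add_mul, Finset.sum_add_distrib],
        fun c a => by
          simp only [t_smul2 hFt, smul_eq_mul, mul_assoc, Finset.mul_sum]⟩)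
      (fun u => ⟨fun a b => by
          simp only [t_add2 hGt, mul_add, Finset.sum_add_distrib],
        fun c a => by
          simp only [t_smul2 hGt, smul_eq_mul, Finset.mul_sum]
          refine Finset.sum_congr rfl fun i _ => Finset.sum_congr rfl fun k _ => by ring⟩)
  rw [stepA]
  rw [show (∑ i, ∑ j, ∑ k, F (e i) (φ (e j)) (e k) * G (φ (e i)) (e j) (e k))
      = ∑ j, ∑ i, ∑ k, F (e i) (φ (e j)) (e k) * G (φ (e i)) (e j) (e k) from
    Finset.sum_comm]
  rw [stepB]
  rw [show (∑ j, ∑ i, ∑ k, F (e i) (e j) (e k) * G (φ (e i)) (φ (e j)) (e k))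
      = ∑ i, ∑ j, ∑ k, F (e i) (e j) (e k) * G (φ (e i)) (φ (e j)) (e k) from
    Finset.sum_comm]
  ring

/-- orthogonality of a `T = +1` form against a `T = -1` form. -/
lemma orth1 (hFt : Trilinear F) (hGt : Trilinear G)
    (hF1 : ∀ x y z, F (φ x) (φ y) z = F x y z)
    (hG1 : ∀ x y z, G (φ x) (φ y) z = -G x y z) : innerF e F G = 0 := by
  have key : innerF e F G = -innerF e F G := by
    conv_lhs => rw [show innerF e F G
        = ∑ i, ∑ j, ∑ k, F (φ (e i)) (φ (e j)) (e k) * G (e i) (e j) (e k) by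
      simp only [innerF, hF1]]
    rw [inner_TT_swap e hacm hFt hGt]
    simp only [hG1, innerF, mul_neg, Finset.sum_neg_distrib]
  linarith

/-- vanishing of `Σ_j G(φ e_j, e_j, w)` for a Good form. -/
lemma sum_Gphi (hg : Good φ ξ G) (hzero : ∀ w, fTr e G w = 0) (w : V) :
    ∑ j, G (φ (e j)) (e j) w = 0 := by
  have h1 : ∑ j, G (φ (e j)) (e j) w = -∑ j, G (e j) (φ (e j)) w := by
    exact swap_phi_B hacm e (fun u v => G u v w)
      (fun v => ⟨fun a b => t_add1 hg.tri a b _ _, fun c a => t_smul1 hg.tri c a _ _⟩)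
      (fun u => ⟨fun a b => t_add2 hg.tri a b _ _, fun c a => t_smul2 hg.tri c a _ _⟩)
  have h2 : ∀ j, G (e j) (φ (e j)) w = G (e j) (e j) (φ w) := fun j =>
    gmove hacm hg (e j) (e j) w
  rw [h1]
  simp only [h2]
  have h3 : (∑ j, G (e j) (e j) (φ w)) = fTr e G (φ w) := rfl
  rw [h3, hzero (φ w), neg_zero]

end Orth
end St18
namespace St18
variable {n : ℕ} {φ : V →ₗ[ℝ] V} {ξ : V} {η : V →ₗ[ℝ] ℝ} {F G : V → V → V → ℝ}

lemma mul_sum3 {ι : Type*} [Fintype ι] (c : ℝ) (t : ι → ι → ι → ℝ) :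
    ∑ i, ∑ j, ∑ k, c * t i j k = c * ∑ i, ∑ j, ∑ k, t i j k := by
  simp only [← Finset.mul_sum]

section Orth2
variable (e : OrthonormalBasis (Fin (2 * n + 1)) ℝ V)
variable (hacm : ACM n φ ξ η)
include hacm

/-- orthogonality of an `F₉`-type form against a trace-free Good form. -/
lemma orth2 (hg : Good φ ξ G) (hzero : ∀ w, fTr e G w = 0)
    (h9 : ∀ x y z, F x y z = F9 n φ e F x y z) : innerF e F G = 0 := by
  set c : ℝ := 1 / (2 * ((n : ℝ) - 1)) with hc
  set f : V → ℝ := fTr e F with hf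
  have hpt : ∀ i j k : Fin (2 * n + 1),
      F (e i) (e j) (e k) * G (e i) (e j) (e k)
      = c * (⟪hMap φ (e i), hMap φ (e j)⟫ * (f (e k) * G (e i) (e j) (e k)))
        - c * (⟪hMap φ (e i), hMap φ (e k)⟫ * (f (e j) * G (e i) (e j) (e k)))
        - c * (⟪e i, φ (e j)⟫ * (f (φ (e k)) * G (e i) (e j) (e k)))
        + c * (⟪e i, φ (e k)⟫ * (f (φ (e j)) * G (e i) (e j) (e k))) := by
    intro i j k
    rw [h9]; simp only [F9, hc, hf]; ring
  have hS1 : ∑ i, ∑ j, ∑ k,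
      ⟪hMap φ (e i), hMap φ (e j)⟫ * (f (e k) * G (e i) (e j) (e k)) = 0 := by
    have inner_j : ∀ i k : Fin (2 * n + 1),
        ∑ j, ⟪hMap φ (e i), hMap φ (e j)⟫ * (f (e k) * G (e i) (e j) (e k))
        = f (e k) * G (e i) (e i) (e k) := by
      intro i k
      have hrw : ∀ j : Fin (2 * n + 1),
          ⟪hMap φ (e i), hMap φ (e j)⟫ = ⟪hMap φ (e i), e j⟫ := fun j => by
        rw [inner_h_h hacm, inner_h_left hacm]
      simp only [hrw]
      have hlin : IsLinearMap ℝ (fun v => f (e k) * G (e i) v (e k)) :=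
        ⟨fun a b => by rw [t_add2 hg.tri]; ring,
         fun cc a => by rw [t_smul2 hg.tri, smul_eq_mul]; ring⟩
      rw [sum_inner_lin e hlin (hMap φ (e i))]
      rw [gh2 hacm hg]
    calc ∑ i, ∑ j, ∑ k, ⟪hMap φ (e i), hMap φ (e j)⟫ * (f (e k) * G (e i) (e j) (e k))
        = ∑ i, ∑ k, ∑ j, ⟪hMap φ (e i), hMap φ (e j)⟫ * (f (e k) * G (e i) (e j) (e k)) :=
          Finset.sum_congr rfl fun i _ => Finset.sum_comm
      _ = ∑ i, ∑ k, f (e k) * G (e i) (e i) (e k) :=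
          Finset.sum_congr rfl fun i _ => Finset.sum_congr rfl fun k _ => inner_j i k
      _ = ∑ k, ∑ i, f (e k) * G (e i) (e i) (e k) := Finset.sum_comm
      _ = ∑ k, f (e k) * fTr e G (e k) :=
          Finset.sum_congr rfl fun k _ => by rw [← Finset.mul_sum]; rfl
      _ = 0 := by simp only [hzero, mul_zero, Finset.sum_const_zero]
  have hS2 : ∑ i, ∑ j, ∑ k,
      ⟪hMap φ (e i), hMap φ (e k)⟫ * (f (e j) * G (e i) (e j) (e k)) = 0 := by
    have inner_k : ∀ i j : Fin (2 * n + 1),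
        ∑ k, ⟪hMap φ (e i), hMap φ (e k)⟫ * (f (e j) * G (e i) (e j) (e k))
        = f (e j) * G (e i) (e j) (e i) := by
      intro i j
      have hrw : ∀ k : Fin (2 * n + 1),
          ⟪hMap φ (e i), hMap φ (e k)⟫ = ⟪hMap φ (e i), e k⟫ := fun k => by
        rw [inner_h_h hacm, inner_h_left hacm]
      simp only [hrw]
      have hlin : IsLinearMap ℝ (fun v => f (e j) * G (e i) (e j) v) :=
        ⟨fun a b => by rw [t_add3 hg.tri]; ring,
         fun cc a => by rw [t_smul3 hg.tri, smul_eq_mul]; ring⟩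
      rw [sum_inner_lin e hlin (hMap φ (e i))]
      rw [gh3 hacm hg]
    calc ∑ i, ∑ j, ∑ k, ⟪hMap φ (e i), hMap φ (e k)⟫ * (f (e j) * G (e i) (e j) (e k))
        = ∑ i, ∑ j, f (e j) * G (e i) (e j) (e i) :=
          Finset.sum_congr rfl fun i _ => Finset.sum_congr rfl fun j _ => inner_k i j
      _ = ∑ j, ∑ i, f (e j) * G (e i) (e j) (e i) := Finset.sum_comm
      _ = ∑ j, f (e j) * (-fTr e G (e j)) := by
          refine Finset.sum_congr rfl fun j _ => ?_
          rw [← Finset.mul_sum]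
          congr 1
          have : ∀ i : Fin (2 * n + 1), G (e i) (e j) (e i) = -G (e i) (e i) (e j) :=
            fun i => hg.anti (e i) (e i) (e j)
          simp only [this, Finset.sum_neg_distrib]
          rfl
      _ = 0 := by simp only [hzero, neg_zero, mul_zero, Finset.sum_const_zero]
  have hS3 : ∑ i, ∑ j, ∑ k,
      ⟪e i, φ (e j)⟫ * (f (φ (e k)) * G (e i) (e j) (e k)) = 0 := by
    rw [sum3_rot (fun i j k => ⟪e i, φ (e j)⟫ * (f (φ (e k)) * G (e i) (e j) (e k)))]
    have inner_k : ∀ i j : Fin (2 * n + 1),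
        ∑ k, ⟪e k, φ (e i)⟫ * (f (φ (e j)) * G (e k) (e i) (e j))
        = f (φ (e j)) * G (φ (e i)) (e i) (e j) := by
      intro i j
      have hrw : ∀ k : Fin (2 * n + 1), ⟪e k, φ (e i)⟫ = ⟪φ (e i), e k⟫ := fun k =>
        real_inner_comm _ _
      simp only [hrw]
      have hlin : IsLinearMap ℝ (fun v => f (φ (e j)) * G v (e i) (e j)) :=
        ⟨fun a b => by rw [t_add1 hg.tri]; ring,
         fun cc a => by rw [t_smul1 hg.tri, smul_eq_mul]; ring⟩
      exact sum_inner_lin e hlin (φ (e i))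
    calc ∑ i, ∑ j, ∑ k, ⟪e k, φ (e i)⟫ * (f (φ (e j)) * G (e k) (e i) (e j))
        = ∑ i, ∑ j, f (φ (e j)) * G (φ (e i)) (e i) (e j) :=
          Finset.sum_congr rfl fun i _ => Finset.sum_congr rfl fun j _ => inner_k i j
      _ = ∑ j, ∑ i, f (φ (e j)) * G (φ (e i)) (e i) (e j) := Finset.sum_comm
      _ = ∑ j, f (φ (e j)) * (∑ i, G (φ (e i)) (e i) (e j)) := by
          refine Finset.sum_congr rfl fun j _ => ?_
          rw [← Finset.mul_sum]
      _ = 0 := by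
          refine Finset.sum_eq_zero fun j _ => ?_
          rw [sum_Gphi e hacm hg hzero (e j), mul_zero]
  have hS4 : ∑ i, ∑ j, ∑ k,
      ⟪e i, φ (e k)⟫ * (f (φ (e j)) * G (e i) (e j) (e k)) = 0 := by
    rw [sum3_rot (fun i j k => ⟪e i, φ (e k)⟫ * (f (φ (e j)) * G (e i) (e j) (e k)))]
    have inner_k : ∀ i j : Fin (2 * n + 1),
        ∑ k, ⟪e k, φ (e j)⟫ * (f (φ (e i)) * G (e k) (e i) (e j))
        = f (φ (e i)) * G (φ (e j)) (e i) (e j) := by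
      intro i j
      have hrw : ∀ k : Fin (2 * n + 1), ⟪e k, φ (e j)⟫ = ⟪φ (e j), e k⟫ := fun k =>
        real_inner_comm _ _
      simp only [hrw]
      have hlin : IsLinearMap ℝ (fun v => f (φ (e i)) * G v (e i) (e j)) :=
        ⟨fun a b => by rw [t_add1 hg.tri]; ring,
         fun cc a => by rw [t_smul1 hg.tri, smul_eq_mul]; ring⟩
      exact sum_inner_lin e hlin (φ (e j))
    calc ∑ i, ∑ j, ∑ k, ⟪e k, φ (e j)⟫ * (f (φ (e i)) * G (e k) (e i) (e j))
        = ∑ i, ∑ j, f (φ (e i)) * G (φ (e j)) (e i) (e j) :=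
          Finset.sum_congr rfl fun i _ => Finset.sum_congr rfl fun j _ => inner_k i j
      _ = ∑ i, f (φ (e i)) * (∑ j, G (φ (e j)) (e i) (e j)) := by
          refine Finset.sum_congr rfl fun i _ => ?_
          rw [← Finset.mul_sum]
      _ = 0 := by
          refine Finset.sum_eq_zero fun i _ => ?_
          have hanti : ∀ j : Fin (2 * n + 1),
              G (φ (e j)) (e i) (e j) = -G (φ (e j)) (e j) (e i) := fun j =>
            hg.anti (φ (e j)) (e j) (e i)
          rw [show (∑ j, G (φ (e j)) (e i) (e j)) = -∑ j, G (φ (e j)) (e j) (e i) by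
            simp only [hanti, Finset.sum_neg_distrib]]
          rw [sum_Gphi e hacm hg hzero (e i)]
          ring
  calc innerF e F G
      = ∑ i, ∑ j, ∑ k,
          (c * (⟪hMap φ (e i), hMap φ (e j)⟫ * (f (e k) * G (e i) (e j) (e k)))
          - c * (⟪hMap φ (e i), hMap φ (e k)⟫ * (f (e j) * G (e i) (e j) (e k)))
          - c * (⟪e i, φ (e j)⟫ * (f (φ (e k)) * G (e i) (e j) (e k)))
          + c * (⟪e i, φ (e k)⟫ * (f (φ (e j)) * G (e i) (e j) (e k)))) := by
        simp only [innerF]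
        exact Finset.sum_congr rfl fun i _ => Finset.sum_congr rfl fun j _ =>
          Finset.sum_congr rfl fun k _ => hpt i j k
    _ = 0 := by
        simp only [Finset.sum_add_distrib, Finset.sum_sub_distrib]
        rw [mul_sum3 c, mul_sum3 c, mul_sum3 c, mul_sum3 c, hS1, hS2, hS3, hS4]
        ring

/-- orthogonality of an alternating form against a form with vanishing cyclic sum. -/
lemma orth3 (halt : Alt F) (hSS : ∀ x y z, SS G x y z = 0) : innerF e F G = 0 := by
  have hA2 : (∑ i, ∑ j, ∑ k, F (e i) (e j) (e k) * G (e j) (e k) (e i)) = innerF e F G := by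
    rw [sum3_rot (fun i j k => F (e i) (e j) (e k) * G (e j) (e k) (e i))]
    simp only [innerF]
    refine Finset.sum_congr rfl fun i _ => Finset.sum_congr rfl fun j _ =>
      Finset.sum_congr rfl fun k _ => ?_
    rw [halt.cyc (e k) (e i) (e j)]
  have hA3 : (∑ i, ∑ j, ∑ k, F (e i) (e j) (e k) * G (e k) (e i) (e j)) = innerF e F G := by
    rw [sum3_rot2 (fun i j k => F (e i) (e j) (e k) * G (e k) (e i) (e j))]
    simp only [innerF]
    refine Finset.sum_congr rfl fun i _ => Finset.sum_congr rfl fun j _ =>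
      Finset.sum_congr rfl fun k _ => ?_
    rw [halt.cyc (e i) (e j) (e k)]
  have hz : ∑ i, ∑ j, ∑ k, F (e i) (e j) (e k) * SS G (e i) (e j) (e k) = 0 := by
    simp only [hSS, mul_zero, Finset.sum_const_zero]
  have expand : ∑ i, ∑ j, ∑ k, F (e i) (e j) (e k) * SS G (e i) (e j) (e k)
      = innerF e F G
        + (∑ i, ∑ j, ∑ k, F (e i) (e j) (e k) * G (e j) (e k) (e i))
        + (∑ i, ∑ j, ∑ k, F (e i) (e j) (e k) * G (e k) (e i) (e j)) := by
    simp only [SS, mul_add, Finset.sum_add_distrib, innerF]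
  rw [hA2, hA3] at expand
  rw [expand] at hz
  linarith
end Orth2
end St18
namespace St18
variable {n : ℕ} {φ : V →ₗ[ℝ] V} {ξ : V} {η : V →ₗ[ℝ] ℝ} {F G : V → V → V → ℝ}

section Act
variable (hacm : ACM n φ ξ η) (A : V ≃ₗᵢ[ℝ] V)
variable (hA1 : ∀ x, A (φ x) = φ (A x)) (hA2 : A ξ = ξ)
include hacm

lemma asymm_inner (x y : V) : ⟪A.symm x, A.symm y⟫ = ⟪x, y⟫ := by
  rw [← A.symm.inner_map_map x y]

omit hacm in
include hA1 in
lemma asymm_phi (x : V) : A.symm (φ x) = φ (A.symm x) := by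
  have h0 := hA1 (A.symm x)
  rw [A.apply_symm_apply] at h0
  rw [← h0, A.symm_apply_apply]

omit hacm in
include hA2 in
lemma asymm_xi : A.symm ξ = ξ := by
  have h0 := A.symm_apply_apply ξ
  rw [hA2] at h0
  exact h0

include hA2 in
lemma asymm_eta (x : V) : η (A.symm x) = η x := by
  rw [← inner_xi hacm, ← inner_xi hacm x, ← A.inner_map_map (A.symm x) ξ,
    A.apply_symm_apply, hA2]

include hA1 hA2 in
lemma asymm_h (x : V) : hMap φ (A.symm x) = A.symm (hMap φ x) := by
  rw [hMap_eq hacm, hMap_eq hacm, map_sub, map_smul, asymm_eta hacm A hA2,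
    asymm_xi A hA2]

include hA1 hA2 in
lemma good_actA (h : Good φ ξ F) : Good φ ξ (actA A F) := by
  refine ⟨⟨?_, ?_, ?_⟩, ?_, ?_, ?_, ?_⟩
  · intro y z; constructor <;> intros <;>
      simp only [actA, map_add, map_smul, t_add1 h.tri, t_smul1 h.tri, smul_eq_mul]
  · intro x z; constructor <;> intros <;>
      simp only [actA, map_add, map_smul, t_add2 h.tri, t_smul2 h.tri, smul_eq_mul]
  · intro x y; constructor <;> intros <;>
      simp only [actA, map_add, map_smul, t_add3 h.tri, t_smul3 h.tri, smul_eq_mul]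
  · intro x y z; simp only [actA]; exact h.anti _ _ _
  · intro x y z
    simp only [actA, asymm_phi A hA1]
    exact h.rel _ _ _
  · intro y z
    simp only [actA, asymm_xi A hA2, h.xi1]
  · intro x z
    simp only [actA, asymm_xi A hA2, h.xi2]

lemma actA_F10 (x y z : V) (hA1' : ∀ x, A (φ x) = φ (A x)) :
    F10 φ (actA A F) x y z = F10 φ F (A.symm x) (A.symm y) (A.symm z) := by
  simp only [F10, actA, asymm_phi A hA1']

lemma actA_F12 (x y z : V) (hA1' : ∀ x, A (φ x) = φ (A x)) :
    F12 φ (actA A F) x y z = F12 φ F (A.symm x) (A.symm y) (A.symm z) := by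
  simp only [F12, actA, asymm_phi A hA1']

lemma actA_F11 (x y z : V) (hA1' : ∀ x, A (φ x) = φ (A x)) :
    F11 φ (actA A F) x y z = F11 φ F (A.symm x) (A.symm y) (A.symm z) := by
  simp only [F11, actA, asymm_phi A hA1']

lemma fTr_actA (e : OrthonormalBasis (Fin (2 * n + 1)) ℝ V) (ht : Trilinear F) (z : V) :
    fTr e (actA A F) z = fTr e F (A.symm z) := by
  exact trace_isometry e A (fun u v => F u v (A.symm z))
    (fun v => ⟨fun a b => t_add1 ht a b _ _, fun c a => t_smul1 ht c a _ _⟩)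
    (fun u => ⟨fun a b => t_add2 ht a b _ _, fun c a => t_smul2 ht c a _ _⟩)

include hA1 hA2 in
lemma actA_F9 (e : OrthonormalBasis (Fin (2 * n + 1)) ℝ V) (ht : Trilinear F) (x y z : V) :
    F9 n φ e (actA A F) x y z = F9 n φ e F (A.symm x) (A.symm y) (A.symm z) := by
  simp only [F9]
  rw [fTr_actA hacm A e ht, fTr_actA hacm A e ht, fTr_actA hacm A e ht,
    fTr_actA hacm A e ht]
  simp only [asymm_h hacm A hA1 hA2, ← asymm_phi A hA1, asymm_inner hacm A]

end Act
end St18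
open St18 in
theorem stmt18 (n : ℕ) (φ : V →ₗ[ℝ] V) (ξ : V) (η : V →ₗ[ℝ] ℝ)
    (hacm : ACM n φ ξ η) (hn : 2 ≤ n) (e : OrthonormalBasis (Fin (2 * n + 1)) ℝ V) :
    (∀ F, MemHF φ ξ η F →
      (∀ i, P18 n e φ ξ η i (p18 n e φ F i)) ∧
      ∀ x y z, F x y z = ∑ i : Fin 4, p18 n e φ F i x y z) ∧
    (∀ F, MemHF φ ξ η F →
      ∃! q : Fin 4 → (V → V → V → ℝ),
        (∀ i, P18 n e φ ξ η i (q i)) ∧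
        ∀ x y z, F x y z = ∑ i : Fin 4, q i x y z) ∧
    (∀ i j, i ≠ j → ∀ F G, P18 n e φ ξ η i F → P18 n e φ ξ η j G →
      innerF e F G = 0) ∧
    (∀ A : V ≃ₗᵢ[ℝ] V, (∀ x, A (φ x) = φ (A x)) → A ξ = ξ →
      ∀ i F, P18 n e φ ξ η i F → P18 n e φ ξ η i (actA A F)) := by
  have main : ∀ F, MemHF φ ξ η F →
      (∀ i, P18 n e φ ξ η i (p18 n e φ F i)) ∧
      ∀ x y z, F x y z = ∑ i : Fin 4, p18 n e φ F i x y z := by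
    intro F hF
    have hg : Good φ ξ F := memHF_good hacm hF
    constructor
    · intro i
      fin_cases i
      · exact memF9_of e hacm hn hg
      · exact memF10_of e hacm hn hg
      · exact memF11_of hacm hg
      · exact memF12_of hacm hg
    · intro x y z
      rw [Fin.sum_univ_four]
      show F x y z = F9 n φ e F x y z + (F10 φ F x y z - F9 n φ e F x y z)
        + F11 φ F x y z + (F12 φ F x y z - F11 φ F x y z)
      simp only [F10, F12]; ring
  refine ⟨main, ?_, ?_, ?_⟩
  · -- uniqueness
    intro F hF
    refine ⟨p18 n e φ F, main F hF, ?_⟩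
    intro q ⟨hqmem, hqsum⟩
    have hg : Good φ ξ F := memHF_good hacm hF
    have h0 : MemF9sub n e φ ξ η (q 0) := hqmem 0
    have h1 : MemF10sub n e φ ξ η (q 1) := hqmem 1
    have h2 : MemF11sub φ ξ η (q 2) := hqmem 2
    have h3 : MemF12sub φ ξ η (q 3) := hqmem 3
    obtain ⟨g0, tt0, f9q0, f10q0, f11q0, f12q0⟩ := d0 e hacm h0
    obtain ⟨g1, tt1, ftr1, f9q1, f10q1, f11q1, f12q1⟩ := d1 e hacm hn h1
    obtain ⟨g2, alt2, tt2, ftr2, f9q2, f10q2, f11q2, f12q2⟩ := d2 e hacm h2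
    obtain ⟨g3, tt3, ss3, ftr3, f9q3, f10q3, f11q3, f12q3⟩ := d3 e hacm h3
    have hsum : ∀ x y z, F x y z
        = q 0 x y z + q 1 x y z + q 2 x y z + q 3 x y z := by
      intro x y z
      rw [hqsum x y z, Fin.sum_univ_four]
    have hfTrF : ∀ w, fTr e F w = fTr e (q 0) w := by
      intro w
      have : fTr e F w = fTr e (q 0) w + fTr e (q 1) w + fTr e (q 2) w + fTr e (q 3) w := by
        simp only [fTr, hsum, Finset.sum_add_distrib]
      rw [this, ftr1, ftr2, ftr3]; ring
    have hF9F : ∀ x y z, F9 n φ e F x y z = q 0 x y z := by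
      intro x y z
      rw [F9_congr e hfTrF x y z, f9q0]
    have hF11F : ∀ x y z, F11 φ F x y z = q 2 x y z := by
      intro x y z
      simp only [F11]
      rw [hsum x y z, hsum y z x, hsum z x y,
        hsum (φ x) (φ y) z, hsum (φ y) (φ z) x, hsum (φ z) (φ x) y,
        tt0 x y z, tt0 y z x, tt0 z x y, tt1 x y z, tt1 y z x, tt1 z x y,
        tt2 x y z, tt2 y z x, tt2 z x y, tt3 x y z, tt3 y z x, tt3 z x y]
      have c2a : q 2 y z x = q 2 x y z := alt2.cyc x y z
      have c2b : q 2 z x y = q 2 x y z := (alt2.cyc z x y).symm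
      have s3 := ss3 x y z
      simp only [SS] at s3
      linarith
    funext i
    fin_cases i
    · show q 0 = F9 n φ e F
      funext x y z
      exact (hF9F x y z).symm
    · show q 1 = fun x y z => F10 φ F x y z - F9 n φ e F x y z
      funext x y z
      have : F10 φ F x y z = q 0 x y z + q 1 x y z := by
        simp only [F10]
        rw [hsum x y z, hsum (φ x) (φ y) z, tt0, tt1, tt2, tt3]
        ring
      simp only [this, hF9F x y z]
      ring
    · show q 2 = F11 φ F
      funext x y z
      exact (hF11F x y z).symm
    · show q 3 = fun x y z => F12 φ F x y z - F11 φ F x y z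
      funext x y z
      have : F12 φ F x y z = q 2 x y z + q 3 x y z := by
        simp only [F12]
        rw [hsum x y z, hsum (φ x) (φ y) z, tt0, tt1, tt2, tt3]
        ring
      simp only [this, hF11F x y z]
      ring
  · -- orthogonality
    intro i j hij F G hFm hGm
    fin_cases i <;> fin_cases j
    · exact absurd rfl hij
    · -- (0,1)
      obtain ⟨g0, tt0, f9q0, -, -, -⟩ := d0 e hacm hFm
      obtain ⟨g1, -, ftr1, -, -, -, -⟩ := d1 e hacm hn hGm
      exact orth2 e hacm g1 ftr1 (fun x y z => (f9q0 x y z).symm)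
    · -- (0,2)
      obtain ⟨g0, tt0, -, -, -, -⟩ := d0 e hacm hFm
      obtain ⟨g2, -, tt2, -, -, -, -, -⟩ := d2 e hacm hGm
      exact orth1 e hacm g0.tri g2.tri tt0 tt2
    · -- (0,3)
      obtain ⟨g0, tt0, -, -, -, -⟩ := d0 e hacm hFm
      obtain ⟨g3, tt3, -, -, -, -, -, -⟩ := d3 e hacm hGm
      exact orth1 e hacm g0.tri g3.tri tt0 tt3
    · -- (1,0)
      rw [innerF_comm]
      obtain ⟨g0, tt0, f9q0, -, -, -⟩ := d0 e hacm hGm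
      obtain ⟨g1, -, ftr1, -, -, -, -⟩ := d1 e hacm hn hFm
      exact orth2 e hacm g1 ftr1 (fun x y z => (f9q0 x y z).symm)
    · exact absurd rfl hij
    · -- (1,2)
      obtain ⟨g1, tt1, -, -, -, -, -⟩ := d1 e hacm hn hFm
      obtain ⟨g2, -, tt2, -, -, -, -, -⟩ := d2 e hacm hGm
      exact orth1 e hacm g1.tri g2.tri tt1 tt2
    · -- (1,3)
      obtain ⟨g1, tt1, -, -, -, -, -⟩ := d1 e hacm hn hFm
      obtain ⟨g3, tt3, -, -, -, -, -, -⟩ := d3 e hacm hGm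
      exact orth1 e hacm g1.tri g3.tri tt1 tt3
    · -- (2,0)
      rw [innerF_comm]
      obtain ⟨g0, tt0, -, -, -, -⟩ := d0 e hacm hGm
      obtain ⟨g2, -, tt2, -, -, -, -, -⟩ := d2 e hacm hFm
      exact orth1 e hacm g0.tri g2.tri tt0 tt2
    · -- (2,1)
      rw [innerF_comm]
      obtain ⟨g1, tt1, -, -, -, -, -⟩ := d1 e hacm hn hGm
      obtain ⟨g2, -, tt2, -, -, -, -, -⟩ := d2 e hacm hFm
      exact orth1 e hacm g1.tri g2.tri tt1 tt2
    · exact absurd rfl hij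
    · -- (2,3)
      obtain ⟨g2, alt2, -, -, -, -, -, -⟩ := d2 e hacm hFm
      obtain ⟨g3, -, ss3, -, -, -, -, -⟩ := d3 e hacm hGm
      exact orth3 e hacm alt2 ss3
    · -- (3,0)
      rw [innerF_comm]
      obtain ⟨g0, tt0, -, -, -, -⟩ := d0 e hacm hGm
      obtain ⟨g3, tt3, -, -, -, -, -, -⟩ := d3 e hacm hFm
      exact orth1 e hacm g0.tri g3.tri tt0 tt3
    · -- (3,1)
      rw [innerF_comm]
      obtain ⟨g1, tt1, -, -, -, -, -⟩ := d1 e hacm hn hGm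
      obtain ⟨g3, tt3, -, -, -, -, -, -⟩ := d3 e hacm hFm
      exact orth1 e hacm g1.tri g3.tri tt1 tt3
    · -- (3,2)
      rw [innerF_comm]
      obtain ⟨g2, alt2, -, -, -, -, -, -⟩ := d2 e hacm hGm
      obtain ⟨g3, -, ss3, -, -, -, -, -⟩ := d3 e hacm hFm
      exact orth3 e hacm alt2 ss3
    · exact absurd rfl hij
  · -- invariance
    intro A hA1 hA2 i F hFm
    fin_cases i
    · -- F9 subspace
      obtain ⟨hInF, hh, h9⟩ := hFm
      have hg : Good φ ξ F := good_of_inF_h hacm hInF hh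
      have hga : Good φ ξ (actA A F) := good_actA hacm A hA1 hA2 hg
      refine ⟨good_inF hacm hga, (good_hF_eq hacm hga).symm, ?_⟩
      funext x y z
      rw [actA_F9 hacm A hA1 hA2 e hg.tri]
      exact congrFun (congrFun (congrFun h9 (A.symm x)) (A.symm y)) (A.symm z)
    · obtain ⟨hInF, hh, heq⟩ := hFm
      have hg : Good φ ξ F := good_of_inF_h hacm hInF hh
      have hga : Good φ ξ (actA A F) := good_actA hacm A hA1 hA2 hg
      refine ⟨good_inF hacm hga, (good_hF_eq hacm hga).symm, ?_⟩
      funext x y z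
      show actA A F x y z = F10 φ (actA A F) x y z - F9 n φ e (actA A F) x y z
      rw [actA_F10 hacm A x y z hA1, actA_F9 hacm A hA1 hA2 e hg.tri]
      have h' : F (A.symm x) (A.symm y) (A.symm z)
          = F10 φ F (A.symm x) (A.symm y) (A.symm z)
            - F9 n φ e F (A.symm x) (A.symm y) (A.symm z) :=
        congrFun (congrFun (congrFun heq (A.symm x)) (A.symm y)) (A.symm z)
      exact h'
    · obtain ⟨hInF, hh, heq⟩ := hFm
      have hg : Good φ ξ F := good_of_inF_h hacm hInF hh
      have hga : Good φ ξ (actA A F) := good_actA hacm A hA1 hA2 hg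
      refine ⟨good_inF hacm hga, (good_hF_eq hacm hga).symm, ?_⟩
      funext x y z
      rw [actA_F11 hacm A x y z hA1]
      exact congrFun (congrFun (congrFun heq (A.symm x)) (A.symm y)) (A.symm z)
    · obtain ⟨hInF, hh, heq⟩ := hFm
      have hg : Good φ ξ F := good_of_inF_h hacm hInF hh
      have hga : Good φ ξ (actA A F) := good_actA hacm A hA1 hA2 hg
      refine ⟨good_inF hacm hga, (good_hF_eq hacm hga).symm, ?_⟩
      funext x y z
      show actA A F x y z = F12 φ (actA A F) x y z - F11 φ (actA A F) x y z
      rw [actA_F12 hacm A x y z hA1, actA_F11 hacm A x y z hA1]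
      have h' : F (A.symm x) (A.symm y) (A.symm z)
          = F12 φ F (A.symm x) (A.symm y) (A.symm z)
            - F11 φ F (A.symm x) (A.symm y) (A.symm z) :=
        congrFun (congrFun (congrFun heq (A.symm x)) (A.symm y)) (A.symm z)
      exact h'
end
end

section
/- For any two distinct indices i ≠ j in {1, …, 12}, if F ∈ 𝔽 belongs to both 𝔽_i and 𝔽_j, then F = 0. (Equivalently: an almost contact metric manifold belonging to two distinct basic classes 𝒲_i and 𝒲_j is cosymplectic, i.e. its fundamental tensor F vanishes.) -/
open scoped BigOperators RealInnerProductSpace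

noncomputable section

variable {V : Type*} [NormedAddCommGroup V] [InnerProductSpace ℝ V]

/-- The twelve basic subspaces `𝔽₁, …, 𝔽₁₂` of `𝔽`. -/
def P19 (n : ℕ) {ι : Type*} [Fintype ι] (e : OrthonormalBasis ι ℝ V) (φ : V →ₗ[ℝ] V)
    (ξ : V) (η : V →ₗ[ℝ] ℝ) : Fin 12 → (V → V → V → ℝ) → Prop
  | 0 => MemF1sub φ ξ η
  | 1 => MemF2sub n e φ ξ η
  | 2 => MemF3sub n e φ ξ η
  | 3 => MemF4sub' n e φ ξ η
  | 4 => MemF5sub' n e φ ξ η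
  | 5 => MemF6sub φ ξ η
  | 6 => MemF7sub φ ξ η
  | 7 => MemF8sub φ ξ η
  | 8 => MemF9sub n e φ ξ η
  | 9 => MemF10sub n e φ ξ η
  | 10 => MemF11sub φ ξ η
  | 11 => MemF12sub φ ξ η

section Aux

variable {n : ℕ} {φ : V →ₗ[ℝ] V} {ξ : V} {η : V →ₗ[ℝ] ℝ} {F : V → V → V → ℝ}

lemma app3 {F G : V → V → V → ℝ} (h : F = G) (x y z : V) : F x y z = G x y z := by rw [h]

lemma acm_eta_xi (h : ACM n φ ξ η) : η ξ = 1 := by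
  obtain ⟨-, h2, h3, -, h5, -⟩ := h
  have hx := h2 ξ
  rw [h3, map_zero] at hx
  have hsm : (η ξ - 1) • ξ = 0 := by
    rw [sub_smul, one_smul]
    rw [eq_comm, neg_add_eq_zero] at hx
    rw [← hx, sub_self]
  rcases smul_eq_zero.mp hsm with h | h
  · linarith
  · rw [h] at h5; simp at h5

lemma acm_eta (h : ACM n φ ξ η) (x : V) : η x = ⟪x, ξ⟫ := by
  have h6 := h.2.2.2.2.2 x ξ
  rw [h.2.2.1, inner_zero_right, acm_eta_xi h] at h6
  linarith

lemma acm_eta' (h : ACM n φ ξ η) (x : V) : ⟪ξ, x⟫ = η x := by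
  rw [acm_eta h x, real_inner_comm]

lemma acm_eta_phi (h : ACM n φ ξ η) (x : V) : η (φ x) = 0 := h.2.2.2.1 x

lemma acm_skew (h : ACM n φ ξ η) (x y : V) : ⟪φ x, y⟫ = -⟪x, φ y⟫ := by
  have h6 := h.2.2.2.2.2 x (φ y)
  rw [acm_eta_phi h, mul_zero, sub_zero, h.2.1 y] at h6
  rw [inner_add_right, inner_neg_right, real_inner_smul_right] at h6
  rw [← acm_eta h, acm_eta_phi h, mul_zero, add_zero] at h6
  linarith

lemma acm_inner_self_phi (h : ACM n φ ξ η) (x : V) : ⟪x, φ x⟫ = 0 := by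
  have h1 := acm_skew h x x
  have h2 := real_inner_comm x (φ x)
  linarith

lemma hMap_eq (h : ACM n φ ξ η) (x : V) : hMap φ x = x - η x • ξ := by
  rw [hMap, h.2.1 x]; abel

lemma acm_eta_h (h : ACM n φ ξ η) (x : V) : η (hMap φ x) = 0 := by
  rw [hMap_eq h, map_sub, map_smul, acm_eta_xi h]; simp

lemma h_phi (h : ACM n φ ξ η) (x : V) : hMap φ (φ x) = φ x := by
  rw [hMap_eq h, acm_eta_phi h]; simp

lemma h_h (h : ACM n φ ξ η) (x : V) : hMap φ (hMap φ x) = hMap φ x := by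
  rw [hMap_eq h (hMap φ x), acm_eta_h h]; simp

lemma h_xi (h : ACM n φ ξ η) : hMap φ ξ = 0 := by
  rw [hMap_eq h, acm_eta_xi h]; simp

lemma inner_h_h (h : ACM n φ ξ η) (x y : V) :
    ⟪hMap φ x, hMap φ y⟫ = ⟪x, y⟫ - η x * η y := by
  rw [hMap_eq h, hMap_eq h]
  rw [inner_sub_left, inner_sub_right, inner_sub_right, real_inner_smul_left, real_inner_smul_right,
    real_inner_smul_left, real_inner_smul_right]
  rw [← acm_eta h, acm_eta' h, h.2.2.2.2.1]
  ring

lemma inner_phi_xi (h : ACM n φ ξ η) (x : V) : ⟪φ x, ξ⟫ = 0 := by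
  rw [← acm_eta h, acm_eta_phi h]

lemma exists_x0 (h : ACM n φ ξ η) (hn : 2 ≤ n) (e : OrthonormalBasis (Fin (2 * n + 1)) ℝ V) :
    ∃ x0 : V, η x0 = 0 ∧ ⟪x0, x0⟫ ≠ 0 := by
  have hlt0 : 0 < 2 * n + 1 := by omega
  have hlt1 : 1 < 2 * n + 1 := by omega
  set a := e ⟨0, hlt0⟩ with ha_def
  set b := e ⟨1, hlt1⟩ with hb_def
  by_cases ha : hMap φ a = 0
  · by_cases hb : hMap φ b = 0
    · exfalso
      have hae : a = η a • ξ := by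
        have := hMap_eq h a; rw [ha] at this
        have := this.symm
        rwa [sub_eq_zero] at this
      have hbe : b = η b • ξ := by
        have := hMap_eq h b; rw [hb] at this
        have := this.symm
        rwa [sub_eq_zero] at this
      have hab : ⟪a, b⟫ = 0 := by
        refine e.orthonormal.2 ?_
        simp [Fin.ext_iff]
      have haa : ⟪a, a⟫ = 1 := by
        have h1 := e.orthonormal.1 ⟨0, hlt0⟩
        rw [← ha_def] at h1
        rw [real_inner_self_eq_norm_mul_norm, h1, one_mul]
      have hbb : ⟪b, b⟫ = 1 := by
        have h1 := e.orthonormal.1 ⟨1, hlt1⟩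
        rw [← hb_def] at h1
        rw [real_inner_self_eq_norm_mul_norm, h1, one_mul]
      rw [hae, hbe] at hab
      rw [hae] at haa
      rw [hbe] at hbb
      rw [real_inner_smul_left, real_inner_smul_right, h.2.2.2.2.1] at hab haa hbb
      nlinarith
    · exact ⟨hMap φ b, acm_eta_h h b, by rwa [ne_eq, inner_self_eq_zero]⟩
  · exact ⟨hMap φ a, acm_eta_h h a, by rwa [ne_eq, inner_self_eq_zero]⟩

end Aux
section Aux2

variable {n : ℕ} {φ : V →ₗ[ℝ] V} {ξ : V} {η : V →ₗ[ℝ] ℝ} {F : V → V → V → ℝ}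

lemma tri_zero1 (ht : Trilinear F) (y z : V) : F 0 y z = 0 := (ht.1 y z).map_zero
lemma tri_zero2 (ht : Trilinear F) (x z : V) : F x 0 z = 0 := (ht.2.1 x z).map_zero
lemma tri_zero3 (ht : Trilinear F) (x y : V) : F x y 0 = 0 := (ht.2.2 x y).map_zero

lemma phi2_slot1 (h : ACM n φ ξ η) (ht : Trilinear F) (x y z : V) :
    F (φ (φ x)) y z = -F x y z + η x * F ξ y z := by
  rw [h.2.1 x, (ht.1 y z).map_add, (ht.1 y z).map_neg, (ht.1 y z).map_smul, smul_eq_mul]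

lemma phi2_slot2 (h : ACM n φ ξ η) (ht : Trilinear F) (x y z : V) :
    F x (φ (φ y)) z = -F x y z + η y * F x ξ z := by
  rw [h.2.1 y, (ht.2.1 x z).map_add, (ht.2.1 x z).map_neg, (ht.2.1 x z).map_smul, smul_eq_mul]

lemma phi2_slot3 (h : ACM n φ ξ η) (ht : Trilinear F) (x y z : V) :
    F x y (φ (φ z)) = -F x y z + η z * F x y ξ := by
  rw [h.2.1 z, (ht.2.2 x y).map_add, (ht.2.2 x y).map_neg, (ht.2.2 x y).map_smul, smul_eq_mul]

section Hclass

variable (h : ACM n φ ξ η) (ht : Trilinear F) (hhf : F = hF φ F)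
include h ht hhf

lemma hf_xi1 (y z : V) : F ξ y z = 0 := by
  have h1 : F ξ y z = F (hMap φ ξ) (hMap φ y) (hMap φ z) := app3 hhf ξ y z
  rw [h_xi h] at h1
  rw [h1, tri_zero1 ht]

lemma hf_xi2 (x z : V) : F x ξ z = 0 := by
  have h1 : F x ξ z = F (hMap φ x) (hMap φ ξ) (hMap φ z) := app3 hhf x ξ z
  rw [h_xi h] at h1
  rw [h1, tri_zero2 ht]

lemma hf_xi3 (x y : V) : F x y ξ = 0 := by
  have h1 : F x y ξ = F (hMap φ x) (hMap φ y) (hMap φ ξ) := app3 hhf x y ξ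
  rw [h_xi h] at h1
  rw [h1, tri_zero3 ht]

lemma hphi2_1 (x y z : V) : F (φ (φ x)) y z = -F x y z := by
  rw [phi2_slot1 h ht, hf_xi1 h ht hhf, mul_zero, add_zero]

lemma hphi2_2 (x y z : V) : F x (φ (φ y)) z = -F x y z := by
  rw [phi2_slot2 h ht, hf_xi2 h ht hhf, mul_zero, add_zero]

lemma hphi2_3 (x y z : V) : F x y (φ (φ z)) = -F x y z := by
  rw [phi2_slot3 h ht, hf_xi3 h ht hhf, mul_zero, add_zero]

end Hclass

lemma hphi23 (h : ACM n φ ξ η) (hin : InF φ ξ η F) (hhf : F = hF φ F) (x y z : V) :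
    F x (φ y) (φ z) = -F x y z := by
  have h1 := hin.2.2 x y z
  rw [hf_xi2 h hin.1 hhf, hf_xi3 h hin.1 hhf, mul_zero, mul_zero, add_zero, add_zero] at h1
  linarith

section Parity

variable {ι : Type*} [Fintype ι] {e : OrthonormalBasis ι ℝ V}

lemma fTr_xi (h : ACM n φ ξ η) (ht : Trilinear F) (hhf : F = hF φ F) :
    fTr e F ξ = 0 := by
  unfold fTr
  exact Finset.sum_eq_zero fun i _ => hf_xi3 h ht hhf _ _

lemma fTr_phi2 (h : ACM n φ ξ η) (ht : Trilinear F) (hhf : F = hF φ F) (w : V) :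
    fTr e F (φ (φ w)) = -fTr e F w := by
  unfold fTr
  rw [← Finset.sum_neg_distrib]
  exact Finset.sum_congr rfl fun i _ => by
    rw [phi2_slot3 h ht, hf_xi3 h ht hhf, mul_zero, add_zero]

lemma inner_phi_h (h : ACM n φ ξ η) (x z : V) : ⟪φ x, hMap φ z⟫ = -⟪x, φ z⟫ := by
  rw [hMap_eq h, inner_sub_right, real_inner_smul_right, inner_phi_xi h, mul_zero, sub_zero,
    acm_skew h]

lemma parity9 (h : ACM n φ ξ η) (ht : Trilinear F) (hhf : F = hF φ F) (x y z : V) :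
    F9 n φ e F (φ x) (φ y) z = F9 n φ e F x y z := by
  simp only [F9]
  rw [h_phi h x, h_phi h y]
  rw [inner_phi_h h x z]
  rw [h.2.2.2.2.2 x y]
  have r3 : ⟪φ x, φ (φ y)⟫ = ⟪x, φ y⟫ := by
    rw [h.2.2.2.2.2 x (φ y), acm_eta_phi h, mul_zero, sub_zero]
  rw [r3, fTr_phi2 h ht hhf y]
  rw [h.2.2.2.2.2 x z]
  rw [inner_h_h h x y, inner_h_h h x z]
  ring

lemma parity10 (h : ACM n φ ξ η) (ht : Trilinear F) (hhf : F = hF φ F) (x y z : V) :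
    F10 φ F (φ x) (φ y) z = F10 φ F x y z := by
  simp only [F10]
  rw [hphi2_1 h ht hhf, hphi2_2 h ht hhf]
  ring

lemma parity12 (h : ACM n φ ξ η) (ht : Trilinear F) (hhf : F = hF φ F) (x y z : V) :
    F12 φ F (φ x) (φ y) z = -F12 φ F x y z := by
  simp only [F12]
  rw [hphi2_1 h ht hhf, hphi2_2 h ht hhf]
  ring

lemma parity11 (h : ACM n φ ξ η) (hin : InF φ ξ η F) (hhf : F = hF φ F) (x y z : V) :
    F11 φ F (φ x) (φ y) z = -F11 φ F x y z := by
  have ht := hin.1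
  have r4 : ∀ a b c : V, F a (φ b) (φ c) = -F a b c := hphi23 h hin hhf
  have t4 : F (φ (φ x)) (φ (φ y)) z = F x y z := by
    rw [hphi2_1 h ht hhf, hphi2_2 h ht hhf]; ring
  have t5 : F (φ (φ y)) (φ z) (φ x) = F y z x := by
    rw [hphi2_1 h ht hhf, r4]; ring
  have t6 : F (φ z) (φ (φ x)) (φ y) = -F (φ z) (φ x) y := r4 (φ z) (φ x) y
  have t2 : F (φ y) z (φ x) = F (φ y) (φ z) x := by
    have a1 := hphi2_2 h ht hhf (φ y) z (φ x)
    have a2 := r4 (φ y) (φ z) x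
    linarith
  have t3 : F z (φ x) (φ y) = -F z x y := r4 z x y
  simp only [F11]
  rw [t4, t5, t6, t2, t3]
  ring

end Parity

end Aux2
section Aux3

variable {n : ℕ} {φ : V →ₗ[ℝ] V} {ξ : V} {η : V →ₗ[ℝ] ℝ} {F : V → V → V → ℝ}
variable {ι : Type*} [Fintype ι] {e : OrthonormalBasis ι ℝ V}

lemma factor_zero {A ip : ℝ} (hip : ip ≠ 0) (h : A * ip = 0) : A = 0 :=
  (mul_eq_zero.mp h).resolve_right hip

/-! ### Cross lemmas -/

lemma cross_zero (hz : hF φ F = 0) (hhf : F = hF φ F) (x y z : V) : F x y z = 0 := by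
  have h1 := app3 hhf x y z
  have h2 := app3 hz x y z
  simp only [Pi.zero_apply] at h2
  rw [h1, h2]

lemma hF_zero_c0 (h : ACM n φ ξ η) (h1 : F = F3 ξ η F) : hF φ F = 0 := by
  funext x y z
  have h2 : hF φ F x y z = F3 ξ η F (hMap φ x) (hMap φ y) (hMap φ z) := by
    exact app3 h1 _ _ _
  rw [h2]
  simp [F3, acm_eta_h h]

lemma hF_zero_c1 (h : ACM n φ ξ η) (h1 : F = F7 n e ξ η F) : hF φ F = 0 := by
  funext x y z
  have h2 : hF φ F x y z = F7 n e ξ η F (hMap φ x) (hMap φ y) (hMap φ z) := by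
    exact app3 h1 _ _ _
  rw [h2]
  simp [F7, acm_eta_h h]

lemma hF_zero_c2 (h : ACM n φ ξ η) (h1 : F = F8 n φ e ξ η F) : hF φ F = 0 := by
  funext x y z
  have h2 : hF φ F x y z = F8 n φ e ξ η F (hMap φ x) (hMap φ y) (hMap φ z) := by
    exact app3 h1 _ _ _
  rw [h2]
  simp [F8, acm_eta_h h]

/-! ### Vertical pair lemmas -/

lemma sign_conflict {G : V → V → V → ℝ} (hp : F = G) (hm : F = -G) (x y z : V) :
    F x y z = 0 := by
  have h1 := app3 hp x y z
  have h2 := app3 hm x y z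
  simp only [Pi.neg_apply] at h2
  linarith

lemma p0_omega (h1 : F = F3 ξ η F) (hω : ∀ z, F ξ ξ z = 0) (x y z : V) : F x y z = 0 := by
  rw [app3 h1]
  simp [F3, hω]

lemma pF5_g0 (h7 : ∀ x y, F x y ξ = 0) (hin : InF φ ξ η F)
    (h5 : F = F5 ξ η F ∨ F = -F5 ξ η F) (x y z : V) : F x y z = 0 := by
  have hg : ∀ a b : V, F a ξ b = 0 := by
    intro a b
    have h2 := hin.2.1 a ξ b
    rw [h7 a b] at h2
    simpa using h2
  rcases h5 with h5 | h5 <;> rw [app3 h5] <;> simp [F5, hg]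

section Vpairs

variable (h : ACM n φ ξ η) {x0 : V} (h0 : η x0 = 0) (hip : ⟪x0, x0⟫ ≠ 0)
include h h0

lemma F7_val (h2 : F = F7 n e ξ η F) {u : V} (hu : η u = 0) :
    F u ξ u = -(1 / (2 * (n : ℝ)) * fTr e F ξ * ⟪u, u⟫) := by
  rw [app3 h2]
  simp only [F7]
  rw [hu, acm_eta_xi h, ← acm_eta h, hu]
  ring

include hip in
lemma F7_zero_of (h2 : F = F7 n e ξ η F) (hval : F x0 ξ x0 = 0) (x y z : V) : F x y z = 0 := by
  have v2 := F7_val h h0 h2 h0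
  rw [hval] at v2
  have hA : 1 / (2 * (n : ℝ)) * fTr e F ξ = 0 := factor_zero hip (by linarith)
  rw [app3 h2]
  simp only [F7]
  rw [hA, zero_mul]

lemma F8_wa (h2 : F = F8 n φ e ξ η F) :
    F (φ x0) ξ x0 = -(-(1 / (2 * (n : ℝ))) * fTrStar φ e F ξ * ⟪x0, x0⟫) := by
  rw [app3 h2]
  simp only [F8]
  rw [h0, acm_eta_xi h, h.2.2.1, inner_zero_right, h.2.2.2.2.2 x0 x0, h0]
  ring

lemma F8_wb (h2 : F = F8 n φ e ξ η F) :
    F x0 ξ (φ x0) = -(1 / (2 * (n : ℝ))) * fTrStar φ e F ξ * ⟪x0, x0⟫ := by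
  rw [app3 h2]
  simp only [F8]
  rw [acm_eta_phi h, acm_eta_xi h, h.2.1 x0, inner_add_right, inner_neg_right,
    real_inner_smul_right, ← acm_eta h, h0]
  ring

lemma F8_wc (h2 : F = F8 n φ e ξ η F) :
    F (φ (φ x0)) ξ (φ x0) = -(-(1 / (2 * (n : ℝ))) * fTrStar φ e F ξ * ⟪x0, x0⟫) := by
  rw [app3 h2]
  simp only [F8]
  rw [acm_eta_phi h, acm_eta_xi h, h.2.2.1, inner_zero_right,
    h.2.2.2.2.2 (φ x0) (φ x0), acm_eta_phi h, h.2.2.2.2.2 x0 x0, h0]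
  ring

lemma F8_wd (h2 : F = F8 n φ e ξ η F) : F x0 ξ x0 = 0 := by
  rw [app3 h2]
  simp only [F8]
  rw [h0, acm_eta_xi h, h.2.2.1, inner_zero_right, acm_inner_self_phi h]
  ring

include hip in
lemma F8_zero_of (h2 : F = F8 n φ e ξ η F)
    (hval : F (φ x0) ξ x0 = 0) (x y z : V) : F x y z = 0 := by
  have v2 := F8_wa h h0 h2
  rw [hval] at v2
  have hA : -(1 / (2 * (n : ℝ))) * fTrStar φ e F ξ = 0 := factor_zero hip (by linarith)
  rw [app3 h2]
  simp only [F8]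
  rw [hA, zero_mul]

end Vpairs

/-! ### Horizontal class parity lemmas -/

lemma parity_c8 (h : ACM n φ ξ η) (hi : MemF9sub n e φ ξ η F) (x y z : V) :
    F (φ x) (φ y) z = F x y z := by
  have e1 := app3 hi.2.2 (φ x) (φ y) z
  rw [parity9 h hi.1.1 hi.2.1] at e1
  rw [e1, ← app3 hi.2.2 x y z]

lemma parity_c9 (h : ACM n φ ξ η) (hj : MemF10sub n e φ ξ η F) (x y z : V) :
    F (φ x) (φ y) z = F x y z := by
  have e1 := app3 hj.2.2 (φ x) (φ y) z
  have e2 := app3 hj.2.2 x y z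
  simp only [Pi.sub_apply] at e1 e2
  rw [parity10 h hj.1.1 hj.2.1, parity9 h hj.1.1 hj.2.1] at e1
  rw [e1, ← e2]

lemma parity_c10 (h : ACM n φ ξ η) (hi : MemF11sub φ ξ η F) (x y z : V) :
    F (φ x) (φ y) z = -F x y z := by
  have e1 := app3 hi.2.2 (φ x) (φ y) z
  rw [parity11 h hi.1 hi.2.1] at e1
  rw [e1, ← app3 hi.2.2 x y z]

lemma parity_c11 (h : ACM n φ ξ η) (hj : MemF12sub φ ξ η F) (x y z : V) :
    F (φ x) (φ y) z = -F x y z := by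
  have e1 := app3 hj.2.2 (φ x) (φ y) z
  have e2 := app3 hj.2.2 x y z
  simp only [Pi.sub_apply] at e1 e2
  rw [parity12 h hj.1.1 hj.2.1, parity11 h hj.1 hj.2.1] at e1
  rw [e1]
  linarith

lemma parity_conflict (hp : ∀ x y z : V, F (φ x) (φ y) z = F x y z)
    (hm : ∀ x y z : V, F (φ x) (φ y) z = -F x y z) (x y z : V) : F x y z = 0 := by
  have h1 := hp x y z
  have h2 := hm x y z
  linarith

lemma pair89 (h : ACM n φ ξ η) (hi : MemF9sub n e φ ξ η F) (hj : MemF10sub n e φ ξ η F)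
    (x y z : V) : F x y z = 0 := by
  have ht := hi.1.1
  have hhf := hi.2.1
  have K : ∀ x y z : V, F (φ x) (φ y) z = 3 * F x y z := by
    intro x y z
    have h9 := app3 hi.2.2 x y z
    have h10 := app3 hj.2.2 x y z
    simp only [Pi.sub_apply] at h10
    have hF10 : F10 φ F x y z = 1 / 2 * (F x y z + F (φ x) (φ y) z) := rfl
    linarith
  have k1 := K x y z
  have k2 := K (φ x) (φ y) z
  have e1 : F (φ (φ x)) (φ (φ y)) z = F x y z := by
    rw [hphi2_1 h ht hhf, hphi2_2 h ht hhf]; ring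
  linarith

lemma pair1011 (h : ACM n φ ξ η) (hi : MemF11sub φ ξ η F) (hj : MemF12sub φ ξ η F)
    (x y z : V) : F x y z = 0 := by
  have ht := hi.1.1
  have hhf := hi.2.1
  have K : ∀ x y z : V, F (φ x) (φ y) z = -(3 * F x y z) := by
    intro x y z
    have h11 := app3 hi.2.2 x y z
    have h12 := app3 hj.2.2 x y z
    simp only [Pi.sub_apply] at h12
    have hF12 : F12 φ F x y z = 1 / 2 * (F x y z - F (φ x) (φ y) z) := rfl
    linarith
  have k1 := K x y z
  have k2 := K (φ x) (φ y) z
  have e1 : F (φ (φ x)) (φ (φ y)) z = F x y z := by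
    rw [hphi2_1 h ht hhf, hphi2_2 h ht hhf]; ring
  linarith

end Aux3
theorem stmt19 (n : ℕ) (φ : V →ₗ[ℝ] V) (ξ : V) (η : V →ₗ[ℝ] ℝ)
    (hacm : ACM n φ ξ η) (hn : 2 ≤ n) (e : OrthonormalBasis (Fin (2 * n + 1)) ℝ V) :
    ∀ i j : Fin 12, i ≠ j → ∀ F : V → V → V → ℝ,
      P19 n e φ ξ η i F → P19 n e φ ξ η j F → ∀ x y z, F x y z = 0 := by
  obtain ⟨x0, h0, hip⟩ := exists_x0 hacm hn e
  have main : ∀ i j : Fin 12, i < j → ∀ F : V → V → V → ℝ,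
      P19 n e φ ξ η i F → P19 n e φ ξ η j F → ∀ x y z, F x y z = 0 := by
    intro i j hlt F hi hj
    fin_cases i <;> fin_cases j <;>
      first
        | exact absurd hlt (by decide)
        | skip
    · -- pair (0,1)
      have hval : F x0 ξ x0 = 0 := by rw [app3 hi.2]; simp [F3, h0]
      exact F7_zero_of hacm h0 hip hj.2 hval
    · -- pair (0,2)
      have hval : F (φ x0) ξ x0 = 0 := by rw [app3 hi.2]; simp [F3, acm_eta_phi hacm]
      exact F8_zero_of hacm h0 hip hj.2 hval
    · -- pair (0,3)
      exact p0_omega hi.2 (fun z => hj.1.2.2 ξ z)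
    · -- pair (0,4)
      exact p0_omega hi.2 (fun z => hj.1.2.2 ξ z)
    · -- pair (0,5)
      exact p0_omega hi.2 (fun z => hj.1.2.2 ξ z)
    · -- pair (0,6)
      exact p0_omega hi.2 (fun z => hj.1.2.2 ξ z)
    · -- pair (0,7)
      refine p0_omega hi.2 (fun z => ?_)
      have ha := hi.1.2.1 ξ ξ z
      rw [hj.2.2 ξ z] at ha
      simpa using ha
    · -- pair (0,8)
      exact cross_zero (hF_zero_c0 hacm hi.2) hj.2.1
    · -- pair (0,9)
      exact cross_zero (hF_zero_c0 hacm hi.2) hj.2.1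
    · -- pair (0,10)
      exact cross_zero (hF_zero_c0 hacm hi.2) hj.2.1
    · -- pair (0,11)
      exact cross_zero (hF_zero_c0 hacm hi.2) hj.2.1
    · -- pair (1,2)
      exact F7_zero_of hacm h0 hip hi.2 (F8_wd hacm h0 hj.2)
    · -- pair (1,3)
      intro x y z; rw [app3 hi.2]; simp [F7, hj.2.2.2]
    · -- pair (1,4)
      have h5 := app3 hj.2.2.1 x0 ξ x0
      simp only [Pi.neg_apply, F5, acm_eta_xi hacm, h0, one_mul, zero_mul, sub_zero] at h5
      exact F7_zero_of hacm h0 hip hi.2 (by linarith)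
    · -- pair (1,5)
      have h4 := app3 hj.2.1 x0 ξ x0
      simp only [Pi.neg_apply, F4, acm_eta_xi hacm, h0, one_mul, zero_mul, sub_zero] at h4
      have v1 := F7_val hacm h0 hi.2 h0
      have v2 := F7_val hacm h0 hi.2 (acm_eta_phi hacm x0)
      have hpp : ⟪φ x0, φ x0⟫ = ⟪x0, x0⟫ := by rw [hacm.2.2.2.2.2 x0 x0, h0]; ring
      rw [hpp] at v2
      exact F7_zero_of hacm h0 hip hi.2 (by linarith)
    · -- pair (1,6)
      have h5 := app3 hj.2.2 x0 ξ x0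
      simp only [Pi.neg_apply, F5, acm_eta_xi hacm, h0, one_mul, zero_mul, sub_zero] at h5
      exact F7_zero_of hacm h0 hip hi.2 (by linarith)
    · -- pair (1,7)
      have hval : F x0 ξ x0 = 0 := by rw [hi.1.2.1 x0 ξ x0, hj.2.2 x0 x0, neg_zero]
      exact F7_zero_of hacm h0 hip hi.2 hval
    · -- pair (1,8)
      exact cross_zero (hF_zero_c1 hacm hi.2) hj.2.1
    · -- pair (1,9)
      exact cross_zero (hF_zero_c1 hacm hi.2) hj.2.1
    · -- pair (1,10)
      exact cross_zero (hF_zero_c1 hacm hi.2) hj.2.1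
    · -- pair (1,11)
      exact cross_zero (hF_zero_c1 hacm hi.2) hj.2.1
    · -- pair (2,3)
      have h5 := app3 hj.2.2.1 (φ x0) ξ x0
      simp only [F5, acm_eta_xi hacm, h0, one_mul, zero_mul, sub_zero] at h5
      have wa := F8_wa hacm h0 hi.2
      have wb := F8_wb hacm h0 hi.2
      exact F8_zero_of hacm h0 hip hi.2 (by linarith)
    · -- pair (2,4)
      intro x y z; rw [app3 hi.2]; simp [F8, hj.2.2.2]
    · -- pair (2,5)
      have h5 := app3 hj.2.2 (φ x0) ξ x0
      simp only [F5, acm_eta_xi hacm, h0, one_mul, zero_mul, sub_zero] at h5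
      have wa := F8_wa hacm h0 hi.2
      have wb := F8_wb hacm h0 hi.2
      exact F8_zero_of hacm h0 hip hi.2 (by linarith)
    · -- pair (2,6)
      have h4 := app3 hj.2.1 (φ x0) ξ x0
      simp only [Pi.neg_apply, F4, acm_eta_xi hacm, h0, one_mul, zero_mul, sub_zero] at h4
      have wa := F8_wa hacm h0 hi.2
      have wc := F8_wc hacm h0 hi.2
      exact F8_zero_of hacm h0 hip hi.2 (by linarith)
    · -- pair (2,7)
      have hval : F (φ x0) ξ x0 = 0 := by rw [hi.1.2.1 (φ x0) ξ x0, hj.2.2 (φ x0) x0, neg_zero]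
      exact F8_zero_of hacm h0 hip hi.2 hval
    · -- pair (2,8)
      exact cross_zero (hF_zero_c2 hacm hi.2) hj.2.1
    · -- pair (2,9)
      exact cross_zero (hF_zero_c2 hacm hi.2) hj.2.1
    · -- pair (2,10)
      exact cross_zero (hF_zero_c2 hacm hi.2) hj.2.1
    · -- pair (2,11)
      exact cross_zero (hF_zero_c2 hacm hi.2) hj.2.1
    · -- pair (3,4)
      exact sign_conflict hi.2.2.1 hj.2.2.1
    · -- pair (3,5)
      exact sign_conflict hi.2.1 hj.2.1
    · -- pair (3,6)
      exact sign_conflict hi.2.1 hj.2.1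
    · -- pair (3,7)
      exact pF5_g0 hj.2.2 hi.1.1 (Or.inl hi.2.2.1)
    · -- pair (3,8)
      exact cross_zero hi.1.2.1 hj.2.1
    · -- pair (3,9)
      exact cross_zero hi.1.2.1 hj.2.1
    · -- pair (3,10)
      exact cross_zero hi.1.2.1 hj.2.1
    · -- pair (3,11)
      exact cross_zero hi.1.2.1 hj.2.1
    · -- pair (4,5)
      exact sign_conflict hi.2.1 hj.2.1
    · -- pair (4,6)
      exact sign_conflict hi.2.1 hj.2.1
    · -- pair (4,7)
      exact pF5_g0 hj.2.2 hi.1.1 (Or.inr hi.2.2.1)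
    · -- pair (4,8)
      exact cross_zero hi.1.2.1 hj.2.1
    · -- pair (4,9)
      exact cross_zero hi.1.2.1 hj.2.1
    · -- pair (4,10)
      exact cross_zero hi.1.2.1 hj.2.1
    · -- pair (4,11)
      exact cross_zero hi.1.2.1 hj.2.1
    · -- pair (5,6)
      exact sign_conflict hi.2.2 hj.2.2
    · -- pair (5,7)
      exact pF5_g0 hj.2.2 hi.1.1 (Or.inl hi.2.2)
    · -- pair (5,8)
      exact cross_zero hi.1.2.1 hj.2.1
    · -- pair (5,9)
      exact cross_zero hi.1.2.1 hj.2.1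
    · -- pair (5,10)
      exact cross_zero hi.1.2.1 hj.2.1
    · -- pair (5,11)
      exact cross_zero hi.1.2.1 hj.2.1
    · -- pair (6,7)
      exact pF5_g0 hj.2.2 hi.1.1 (Or.inr hi.2.2)
    · -- pair (6,8)
      exact cross_zero hi.1.2.1 hj.2.1
    · -- pair (6,9)
      exact cross_zero hi.1.2.1 hj.2.1
    · -- pair (6,10)
      exact cross_zero hi.1.2.1 hj.2.1
    · -- pair (6,11)
      exact cross_zero hi.1.2.1 hj.2.1
    · -- pair (7,8)
      exact cross_zero hi.2.1 hj.2.1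
    · -- pair (7,9)
      exact cross_zero hi.2.1 hj.2.1
    · -- pair (7,10)
      exact cross_zero hi.2.1 hj.2.1
    · -- pair (7,11)
      exact cross_zero hi.2.1 hj.2.1
    · -- pair (8,9)
      exact pair89 hacm hi hj
    · -- pair (8,10)
      exact parity_conflict (parity_c8 hacm hi) (parity_c10 hacm hj)
    · -- pair (8,11)
      exact parity_conflict (parity_c8 hacm hi) (parity_c11 hacm hj)
    · -- pair (9,10)
      exact parity_conflict (parity_c9 hacm hi) (parity_c10 hacm hj)
    · -- pair (9,11)
      exact parity_conflict (parity_c9 hacm hi) (parity_c11 hacm hj)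
    · -- pair (10,11)
      exact pair1011 hacm hi hj
  intro i j hij F hi hj
  rcases hij.lt_or_gt with hlt | hlt
  · exact main i j hlt F hi hj
  · exact main j i hlt F hj hi
end
end
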